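/- arXiv:2512.13324 — 14 statements merged into one kernel-verified Lean document; each statement's English description precedes it below -/
import Mathlib

section
/- Let ω be an increasing coercive modulus of continuity and φ_ω(t) = ∫₀ᵗ ω(s) ds. Then t·ω⁻¹(t/2) ≤ (φ_ω)*(t) ≤ (t/2)·ω⁻¹(t) for all t ≥ 0. -/
/-! Since `φ_ω' = ω` is increasing, `s ↦ t s - φ_ω(s)` is maximal at `s = ω⁻¹(t)`. Pairing `x` with
`a + b - x` turns concavity of `ω` into the Hermite–Hadamard inequalities
`(b - a) (ω a + ω b) / 2 ≤ ∫ₐᵇ ω ≤ (b - a) ω ((a + b) / 2)`; with `ω 0 = 0` they give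
`r ω(r) / 2 ≤ φ_ω(r) ≤ r ω(r / 2)`. The first, at `r = ω⁻¹(t)`, bounds the maximum by
`t ω⁻¹(t) / 2`; the second, at the competitor `r = 2 ω⁻¹(t / 2)`, gives the lower bound. -/

open Set MeasureTheory intervalIntegral

section HermiteHadamard

variable {f : ℝ → ℝ} {s : Set ℝ} {a b : ℝ}

theorem IntervalIntegrable.comp_reflect (hf : IntervalIntegrable f volume a b) :
    IntervalIntegrable (fun x ↦ f (a + b - x)) volume a b := by
  simpa only [add_sub_cancel_left, add_sub_cancel_right] using (hf.comp_sub_left (a + b)).symm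

theorem intervalIntegral.integral_add_comp_reflect (hf : IntervalIntegrable f volume a b) :
    ∫ x in a..b, (f x + f (a + b - x)) = 2 * ∫ x in a..b, f x := by
  rw [integral_add hf hf.comp_reflect, integral_comp_sub_left, add_sub_cancel_right,
    add_sub_cancel_left, two_mul]

theorem ConcaveOn.add_le_add_map_reflect (hf : ConcaveOn ℝ s f) (hs : Icc a b ⊆ s) {x : ℝ}
    (hx : x ∈ Icc a b) : f a + f b ≤ f x + f (a + b - x) := by
  have hab : a ≤ b := hx.1.trans hx.2
  obtain ⟨μ, ν, hμ, hν, hμν, rfl⟩ := segment_eq_Icc hab ▸ hx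
  have hreflect : a + b - (μ • a + ν • b) = ν • a + μ • b := by
    simp only [smul_eq_mul]; linear_combination -(a + b) * hμν
  have ha : a ∈ s := hs (left_mem_Icc.2 hab)
  have hb : b ∈ s := hs (right_mem_Icc.2 hab)
  have h₁ := hf.2 ha hb hμ hν hμν
  have h₂ := hf.2 ha hb hν hμ ((add_comm ν μ).trans hμν)
  rw [hreflect]
  simp only [smul_eq_mul] at h₁ h₂ ⊢
  linear_combination h₁ + h₂ - (f a + f b) * hμν

theorem ConcaveOn.add_map_reflect_le (hf : ConcaveOn ℝ s f) (hs : Icc a b ⊆ s) {x : ℝ}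
    (hx : x ∈ Icc a b) : f x + f (a + b - x) ≤ 2 * f ((a + b) / 2) := by
  have hx' : a + b - x ∈ Icc a b := ⟨by linarith [hx.2], by linarith [hx.1]⟩
  have h := hf.2 (hs hx) (hs hx') (by norm_num : (0 : ℝ) ≤ 1 / 2) (by norm_num : (0 : ℝ) ≤ 1 / 2)
    (by norm_num)
  simp only [smul_eq_mul] at h
  rw [show 1 / 2 * x + 1 / 2 * (a + b - x) = (a + b) / 2 by ring] at h
  linarith

theorem ConcaveOn.mul_add_div_two_le_integral (hf : ConcaveOn ℝ s f) (hab : a ≤ b)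
    (hs : Icc a b ⊆ s) (hint : IntervalIntegrable f volume a b) :
    (b - a) * ((f a + f b) / 2) ≤ ∫ x in a..b, f x := by
  have h := integral_mono_on hab intervalIntegrable_const
    (hint.add hint.comp_reflect) fun x hx ↦ hf.add_le_add_map_reflect hs hx
  rw [integral_add_comp_reflect hint, intervalIntegral.integral_const, smul_eq_mul] at h
  linarith

theorem ConcaveOn.integral_le_mul_map_midpoint (hf : ConcaveOn ℝ s f) (hab : a ≤ b)
    (hs : Icc a b ⊆ s) (hint : IntervalIntegrable f volume a b) :
    ∫ x in a..b, f x ≤ (b - a) * f ((a + b) / 2) := by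
  have h := integral_mono_on hab (hint.add hint.comp_reflect)
    intervalIntegrable_const fun x hx ↦ hf.add_map_reflect_le hs hx
  rw [integral_add_comp_reflect hint, intervalIntegral.integral_const, smul_eq_mul] at h
  linarith

end HermiteHadamard

section MonotoneIntegrand

variable {f : ℝ → ℝ}

theorem MonotoneOn.intervalIntegrable_of_nonneg (hf : MonotoneOn f (Ici 0)) {a b : ℝ}
    (ha : 0 ≤ a) (hb : 0 ≤ b) : IntervalIntegrable f volume a b :=
  (hf.mono fun _ hx ↦ (le_min ha hb).trans hx.1).intervalIntegrable

theorem MonotoneOn.mul_sub_le_integral (hf : MonotoneOn f (Ici 0)) {r x : ℝ} (hr : 0 ≤ r)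
    (hx : 0 ≤ x) : f r * (x - r) ≤ ∫ u in r..x, f u := by
  rcases le_total r x with hrx | hxr
  · have h := integral_mono_on hrx intervalIntegrable_const
      (hf.intervalIntegrable_of_nonneg hr hx) fun u hu ↦ hf hr (hr.trans hu.1) hu.1
    rw [intervalIntegral.integral_const, smul_eq_mul] at h
    linarith
  · have h := integral_mono_on hxr (hf.intervalIntegrable_of_nonneg hx hr)
      intervalIntegrable_const fun u hu ↦ hf (hx.trans hu.1) hr hu.2
    rw [intervalIntegral.integral_const, smul_eq_mul] at h
    rw [integral_symm]
    linarith

end MonotoneIntegrand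

theorem stmt_4_general (ω ωinv φ conj : ℝ → ℝ)
    (hmono : StrictMonoOn ω (Ici (0:ℝ)))
    (hconc : ConcaveOn ℝ (Ici (0:ℝ)) ω)
    (h0 : ω 0 = 0)
    (hφ : ∀ t, φ t = ∫ s in (0:ℝ)..t, ω s)
    (hinv₁ : ∀ t ∈ Ici (0:ℝ), 0 ≤ ωinv t ∧ ω (ωinv t) = t)
    (hconj : ∀ t, conj t = sSup {y : ℝ | ∃ s : ℝ, 0 ≤ s ∧ y = t * s - φ s}) :
    ∀ t : ℝ, 0 ≤ t → t * ωinv (t / 2) ≤ conj t ∧ conj t ≤ t / 2 * ωinv t := by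
  intro t ht
  have hint : ∀ {a b : ℝ}, 0 ≤ a → 0 ≤ b → IntervalIntegrable ω volume a b :=
    hmono.monotoneOn.intervalIntegrable_of_nonneg
  obtain ⟨hs₀, hωs₀⟩ := hinv₁ (t / 2) (mem_Ici.2 (by positivity))
  obtain ⟨hs₁, hωs₁⟩ := hinv₁ t ht
  set s₀ := ωinv (t / 2)
  set s₁ := ωinv t
  have hφ₁ : s₁ * t / 2 ≤ φ s₁ := by
    have := hconc.mul_add_div_two_le_integral hs₁ (fun _ hx ↦ hx.1) (hint le_rfl hs₁)
    rw [hφ]; rw [h0, hωs₁] at this; linarith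
  have hφ₀ : φ (2 * s₀) ≤ t * s₀ := by
    have := hconc.integral_le_mul_map_midpoint (by positivity : 0 ≤ 2 * s₀) (fun _ hx ↦ hx.1)
      (hint le_rfl (by positivity))
    rw [hφ]; rw [zero_add, mul_div_cancel_left₀ _ two_ne_zero, hωs₀] at this; linarith
  have hbound : ∀ s, 0 ≤ s → t * s - φ s ≤ t / 2 * s₁ := by
    intro s hs
    have := hmono.monotoneOn.mul_sub_le_integral hs₁ hs
    rw [hωs₁, ← integral_interval_sub_left (hint le_rfl hs) (hint le_rfl hs₁), ← hφ, ← hφ] at this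
    linarith
  have hbdd : BddAbove {y : ℝ | ∃ s : ℝ, 0 ≤ s ∧ y = t * s - φ s} :=
    ⟨_, by rintro _ ⟨s, hs, rfl⟩; exact hbound s hs⟩
  rw [hconj]
  refine ⟨?_, Real.sSup_le (by rintro _ ⟨s, hs, rfl⟩; exact hbound s hs) (by positivity)⟩
  calc t * s₀ ≤ t * (2 * s₀) - φ (2 * s₀) := by linarith
    _ ≤ _ := le_csSup hbdd ⟨2 * s₀, by positivity, rfl⟩

theorem stmt_4 (ω ωinv φ conj : ℝ → ℝ)
    (hnonneg : ∀ t ∈ Ici (0:ℝ), 0 ≤ ω t)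
    (hmono : StrictMonoOn ω (Ici (0:ℝ)))
    (hconc : ConcaveOn ℝ (Ici (0:ℝ)) ω)
    (h0 : ω 0 = 0)
    (h0' : Filter.Tendsto ω (nhdsWithin 0 (Ioi (0:ℝ))) (nhds 0))
    (hcoer : Filter.Tendsto ω Filter.atTop Filter.atTop)
    (hφ : ∀ t, φ t = ∫ s in (0:ℝ)..t, ω s)
    (hinv₁ : ∀ t ∈ Ici (0:ℝ), 0 ≤ ωinv t ∧ ω (ωinv t) = t)
    (hinv₂ : ∀ s ∈ Ici (0:ℝ), ωinv (ω s) = s)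
    (hconj : ∀ t, conj t = sSup {y : ℝ | ∃ s : ℝ, 0 ≤ s ∧ y = t * s - φ s}) :
    ∀ t : ℝ, 0 ≤ t → t * ωinv (t / 2) ≤ conj t ∧ conj t ≤ t / 2 * ωinv t :=
  stmt_4_general ω ωinv φ conj hmono hconc h0 hφ hinv₁ hconj
end

section
/- Let X be a real normed space, ω an increasing modulus of continuity with lim_{t→∞} ω(t) = ∞, E ⊆ X, (f,G) : E → ℝ × X* a 1-jet, and M > 0. If for all y, z ∈ E: f(y) ≥ f(z) + G(z)(y−z) + M·(φ_ω)*( ‖G(y)−G(z)‖_* / M ), then for all y, z ∈ E and x ∈ X: f(y) + G(y)(x−y) + M·φ_ω(‖x−y‖) ≥ f(z) + G(z)(x−z). -/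
open Set Filter intervalIntegral

/-!
Since `ω` is nondecreasing, `ω a` is a subgradient of `φ = ∫₀ ω` at every `a ≥ 0`; as `ω → ∞`,
`t s - φ s` is therefore bounded above in `s ≥ 0`, so that the Fenchel–Young inequality
`t s ≤ φ s + φ* t` holds with the genuine supremum. Applying it with `t = ‖G y - G z‖ / M` and
`s = ‖x - y‖`, and estimating `(G z - G y) (x - y) ≤ ‖G y - G z‖ ‖x - y‖`, turns the hypothesis
at `(y, z)` into the conclusion.
-/

noncomputable def fenchelConj (φ : ℝ → ℝ) (t : ℝ) : ℝ :=
  sSup {y : ℝ | ∃ s : ℝ, 0 ≤ s ∧ y = t * s - φ s}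

theorem fenchel_young {φ : ℝ → ℝ} {t s : ℝ}
    (hbdd : BddAbove {y : ℝ | ∃ s : ℝ, 0 ≤ s ∧ y = t * s - φ s}) (hs : 0 ≤ s) :
    t * s ≤ φ s + fenchelConj φ t := by
  have := le_csSup hbdd ⟨s, hs, rfl⟩
  rw [← fenchelConj] at this
  linarith

section Primitive

variable {ω : ℝ → ℝ} (hω : MonotoneOn ω (Ici 0))
include hω

theorem MonotoneOn.intervalIntegrable_of_nonneg_s5 {a b : ℝ} (ha : 0 ≤ a) (hb : 0 ≤ b) :
    IntervalIntegrable ω MeasureTheory.volume a b :=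
  (hω.mono (ordConnected_Ici.uIcc_subset ha hb)).intervalIntegrable

theorem MonotoneOn.mul_sub_le_intervalIntegral {a b : ℝ} (ha : 0 ≤ a) (hb : 0 ≤ b) :
    ω a * (b - a) ≤ ∫ u in a..b, ω u := by
  rcases le_total a b with hab | hba
  · have := integral_mono_on hab intervalIntegrable_const (hω.intervalIntegrable_of_nonneg_s5 ha hb)
      fun u hu => hω ha (ha.trans hu.1) hu.1
    simpa [mul_comm] using this
  · have := integral_mono_on hba (hω.intervalIntegrable_of_nonneg_s5 hb ha) intervalIntegrable_const
      fun u hu => hω (hb.trans hu.1) ha hu.2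
    rw [integral_symm]
    simp only [integral_const, smul_eq_mul] at this
    linarith

theorem MonotoneOn.intervalIntegral_add_mul_sub_le {a b : ℝ} (ha : 0 ≤ a) (hb : 0 ≤ b) :
    (∫ u in 0..a, ω u) + ω a * (b - a) ≤ ∫ u in 0..b, ω u := by
  have := integral_interval_sub_left (hω.intervalIntegrable_of_nonneg_s5 le_rfl hb)
    (hω.intervalIntegrable_of_nonneg_s5 le_rfl ha)
  linarith [hω.mul_sub_le_intervalIntegral ha hb]

theorem MonotoneOn.bddAbove_mul_sub_intervalIntegral (hcoer : Tendsto ω atTop atTop) (t : ℝ) :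
    BddAbove {y : ℝ | ∃ s : ℝ, 0 ≤ s ∧ y = t * s - ∫ u in 0..s, ω u} := by
  obtain ⟨s₀, hts₀, hs₀⟩ := ((hcoer.eventually_ge_atTop t).and (eventually_ge_atTop 0)).exists
  refine ⟨ω s₀ * s₀ - ∫ u in 0..s₀, ω u, ?_⟩
  rintro y ⟨s, hs, rfl⟩
  nlinarith [hω.intervalIntegral_add_mul_sub_le hs₀ hs]

end Primitive

theorem stmt_5_general {X : Type*} [NormedAddCommGroup X] [NormedSpace ℝ X]
    (ω φ conj : ℝ → ℝ)
    (hmono : StrictMonoOn ω (Ici (0:ℝ)))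
    (hcoer : Filter.Tendsto ω Filter.atTop Filter.atTop)
    (hφ : ∀ t, φ t = ∫ s in (0:ℝ)..t, ω s)
    (hconj : ∀ t, conj t = sSup {y : ℝ | ∃ s : ℝ, 0 ≤ s ∧ y = t * s - φ s})
    (E : Set X) (f : X → ℝ) (G : X → X →L[ℝ] ℝ) (M : ℝ) (hM : 0 < M)
    (hjet : ∀ y ∈ E, ∀ z ∈ E,
      f z + G z (y - z) + M * conj (‖G y - G z‖ / M) ≤ f y) :
    ∀ y ∈ E, ∀ z ∈ E, ∀ x : X,
      f z + G z (x - z) ≤ f y + G y (x - y) + M * φ ‖x - y‖ := by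
  obtain rfl : φ = fun t => ∫ s in (0:ℝ)..t, ω s := funext hφ
  obtain rfl : conj = fenchelConj fun t => ∫ s in (0:ℝ)..t, ω s := funext hconj
  intro y hy z hz x
  have hFY := fenchel_young
    (hmono.monotoneOn.bddAbove_mul_sub_intervalIntegral hcoer (‖G y - G z‖ / M))
    (norm_nonneg (x - y))
  have hpair : G z (x - y) - G y (x - y) ≤ ‖G y - G z‖ * ‖x - y‖ := by
    rw [← sub_apply, norm_sub_rev]
    exact (le_abs_self _).trans ((G z - G y).le_opNorm _)
  have hsplit : G z (x - z) = G z (y - z) + G z (x - y) := by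
    rw [← map_add, sub_add_sub_cancel']
  rw [div_mul_eq_mul_div, div_le_iff₀ hM] at hFY
  linarith [hjet y hy z hz]

theorem stmt_5 {X : Type*} [NormedAddCommGroup X] [NormedSpace ℝ X]
    (ω φ conj : ℝ → ℝ)
    (hnonneg : ∀ t ∈ Ici (0:ℝ), 0 ≤ ω t)
    (hmono : StrictMonoOn ω (Ici (0:ℝ)))
    (hconc : ConcaveOn ℝ (Ici (0:ℝ)) ω)
    (h0 : ω 0 = 0)
    (h0' : Filter.Tendsto ω (nhdsWithin 0 (Ioi (0:ℝ))) (nhds 0))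
    (hcoer : Filter.Tendsto ω Filter.atTop Filter.atTop)
    (hφ : ∀ t, φ t = ∫ s in (0:ℝ)..t, ω s)
    (hconj : ∀ t, conj t = sSup {y : ℝ | ∃ s : ℝ, 0 ≤ s ∧ y = t * s - φ s})
    (E : Set X) (f : X → ℝ) (G : X → X →L[ℝ] ℝ) (M : ℝ) (hM : 0 < M)
    (hjet : ∀ y ∈ E, ∀ z ∈ E,
      f z + G z (y - z) + M * conj (‖G y - G z‖ / M) ≤ f y) :
    ∀ y ∈ E, ∀ z ∈ E, ∀ x : X,
      f z + G z (x - z) ≤ f y + G y (x - y) + M * φ ‖x - y‖ :=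
  stmt_5_general ω φ conj hmono hcoer hφ hconj E f G M hM hjet
end

section
/- Let X be a real normed space, ω an increasing modulus of continuity with lim_{t→∞} ω(t) = ∞, E ⊆ X, (f,G) : E → ℝ × X* a 1-jet, and M > 0. If for all y, z ∈ E and x ∈ X: f(y) + G(y)(x−y) + M·φ_ω(‖x−y‖) ≥ f(z) + G(z)(x−z), then for all y, z ∈ E: f(y) ≥ f(z) + G(z)(y−z) + M·(φ_ω)*( ‖G(y)−G(z)‖_* / M ). -/
open Set

theorem stmt_6 {X : Type*} [NormedAddCommGroup X] [NormedSpace ℝ X]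
    (ω φ conj : ℝ → ℝ)
    (hnonneg : ∀ t ∈ Ici (0:ℝ), 0 ≤ ω t)
    (hmono : StrictMonoOn ω (Ici (0:ℝ)))
    (hconc : ConcaveOn ℝ (Ici (0:ℝ)) ω)
    (h0 : ω 0 = 0)
    (h0' : Filter.Tendsto ω (nhdsWithin 0 (Ioi (0:ℝ))) (nhds 0))
    (hcoer : Filter.Tendsto ω Filter.atTop Filter.atTop)
    (hφ : ∀ t, φ t = ∫ s in (0:ℝ)..t, ω s)
    (hconj : ∀ t, conj t = sSup {y : ℝ | ∃ s : ℝ, 0 ≤ s ∧ y = t * s - φ s})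
    (E : Set X) (f : X → ℝ) (G : X → X →L[ℝ] ℝ) (M : ℝ) (hM : 0 < M)
    (hjet : ∀ y ∈ E, ∀ z ∈ E, ∀ x : X,
      f z + G z (x - z) ≤ f y + G y (x - y) + M * φ ‖x - y‖) :
    ∀ y ∈ E, ∀ z ∈ E,
      f z + G z (y - z) + M * conj (‖G y - G z‖ / M) ≤ f y := by
  have hMne : M ≠ 0 := hM.ne'
  have hφ0 : φ 0 = 0 := by rw [hφ]; simp
  have hωint : ∀ u v : ℝ, 0 ≤ u → u ≤ v →
      IntervalIntegrable ω MeasureTheory.volume u v := by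
    intro u v hu huv
    apply MonotoneOn.intervalIntegrable
    apply (hmono.monotoneOn).mono
    rw [uIcc_of_le huv]
    intro x hx
    exact le_trans hu hx.1
  have hφmono : ∀ a b : ℝ, 0 ≤ a → a ≤ b → φ a ≤ φ b := by
    intro a b ha hab
    rw [hφ a, hφ b]
    have h1 := hωint 0 a le_rfl ha
    have h2 := hωint a b ha hab
    have hadd := intervalIntegral.integral_add_adjacent_intervals h1 h2
    have hnn : 0 ≤ ∫ s in a..b, ω s := by
      apply intervalIntegral.integral_nonneg hab
      intro u hu
      exact hnonneg u (le_trans ha hu.1)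
    linarith
  have hφnn : ∀ s : ℝ, 0 ≤ s → 0 ≤ φ s := fun s hs => hφ0 ▸ hφmono 0 s le_rfl hs
  intro y hy z hz
  set T := G z - G y with hT
  set D := f y - f z - G z (y - z) with hD
  have key : ∀ h : X, T h ≤ D + M * φ ‖h‖ := by
    intro h
    have hj := hjet y hy z hz (y + h)
    have e1 : y + h - y = h := by abel
    have e2 : y + h - z = (y - z) + h := by abel
    rw [e1, e2, map_add] at hj
    simp only [hT, ContinuousLinearMap.sub_apply, hD]
    linarith
  have hD0 : 0 ≤ D := by
    have := key 0
    simpa [hφ0] using this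
  have hbound : ∀ s : ℝ, 0 ≤ s → ‖T‖ * s ≤ D + M * φ s := by
    intro s hs
    rcases hs.eq_or_lt with h0s | hs'
    · subst h0s
      have : 0 ≤ M * φ 0 := mul_nonneg hM.le (hφnn 0 le_rfl)
      simp only [mul_zero]
      linarith
    · have hC0 : 0 ≤ D + M * φ s :=
        add_nonneg hD0 (mul_nonneg hM.le (hφnn s hs))
      have hTle : ‖T‖ ≤ (D + M * φ s) / s := by
        apply ContinuousLinearMap.opNorm_le_bound T (div_nonneg hC0 hs)
        intro x
        rcases eq_or_ne x 0 with rfl | hx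
        · simp
        · have hxn : 0 < ‖x‖ := norm_pos_iff.mpr hx
          set c := s / ‖x‖ with hc
          have hcpos : 0 < c := div_pos hs' hxn
          have h1 : ∀ v : X, ‖v‖ = ‖x‖ → T v ≤ (D + M * φ s) / s * ‖x‖ := by
            intro v hv
            have hn : ‖c • v‖ = s := by
              rw [norm_smul, Real.norm_eq_abs, abs_of_pos hcpos, hv, hc]
              field_simp
            have hk := key (c • v)
            rw [hn, map_smul, smul_eq_mul] at hk
            have h2 : T v ≤ (D + M * φ s) / c :=
              (le_div_iff₀ hcpos).mpr (by nlinarith)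
            calc T v ≤ (D + M * φ s) / c := h2
              _ = (D + M * φ s) / s * ‖x‖ := by
                  rw [hc]; field_simp
          have hx1 := h1 x rfl
          have hx2 := h1 (-x) (norm_neg x)
          rw [map_neg] at hx2
          rw [Real.norm_eq_abs, abs_le]
          constructor <;> nlinarith
      exact (le_div_iff₀ hs').mp hTle
  have hnormT : ‖G y - G z‖ = ‖T‖ := by
    rw [hT, ← norm_neg]; congr 1; abel
  have hconjle : conj (‖G y - G z‖ / M) ≤ D / M := by
    rw [hconj]
    apply Real.sSup_le
    · rintro r ⟨s, hs, rfl⟩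
      rw [hnormT]
      calc ‖T‖ / M * s - φ s = (‖T‖ * s - M * φ s) / M := by
            field_simp
        _ ≤ D / M := by
            apply div_le_div_of_nonneg_right ?_ hM.le
            · linarith [hbound s hs]
    · exact div_nonneg hD0 hM.le
  have hfin : M * conj (‖G y - G z‖ / M) ≤ D := (le_div_iff₀' hM).mp hconjle
  rw [hD] at hfin
  linarith
end

section
/- Let X be a real normed space, E ⊆ X, (f,G) : E → ℝ × X* a 1-jet, ω a modulus of continuity, and M ≥ 0 a constant such that f(y) + G(y)(x−y) + M·φ_ω(‖x−y‖) ≥ f(z) + G(z)(x−z) for all y, z ∈ E and x ∈ X. Then ‖G(y) − G(z)‖_* ≤ (4/3)·M·ω(‖y−z‖) for all y, z ∈ E. -/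
open Set MeasureTheory

/-!
Concavity of `ω` gives `ω s + ω (2r - s) ≤ 2 ω r`, hence `φ t ≤ φ (2r) ≤ 2 r ω r` for `t ≤ 2r`,
where `r = ‖y - z‖`. Testing the jet inequality for `(y, z)` at `x = m + w` and for `(z, y)` at
`x = m - w`, with `m` the midpoint of `y, z` and `‖w‖ = 3r/2`, and adding, the values of `f`
cancel and `(G z - G y) w ≤ 2 M r ω r`, i.e. `(G z - G y) v ≤ (4/3) M ω r` for unit `v`.
-/

theorem ConcaveOn.intervalIntegral_le_mul_midpoint {ω : ℝ → ℝ} {a b : ℝ} (hab : a ≤ b)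
    (hconc : ConcaveOn ℝ (Icc a b) ω) (hint : IntervalIntegrable ω volume a b) :
    ∫ s in a..b, ω s ≤ (b - a) * ω ((a + b) / 2) := by
  have hrefl_int : IntervalIntegrable (fun s ↦ ω (a + b - s)) volume a b := by
    simpa using (hint.comp_sub_left (a + b)).symm
  have hrefl : ∫ s in a..b, ω (a + b - s) = ∫ s in a..b, ω s := by
    rw [intervalIntegral.integral_comp_sub_left ω (a + b)]
    ring_nf
  have hpair : ∀ s ∈ Icc a b, ω s + ω (a + b - s) ≤ 2 * ω ((a + b) / 2) := by
    intro s hs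
    have hs' : a + b - s ∈ Icc a b := ⟨by linarith [hs.2], by linarith [hs.1]⟩
    have h := hconc.2 hs hs' (by norm_num : (0 : ℝ) ≤ 1 / 2) (by norm_num : (0 : ℝ) ≤ 1 / 2)
      (by norm_num)
    simp only [smul_eq_mul] at h
    rw [show 1 / 2 * s + 1 / 2 * (a + b - s) = (a + b) / 2 by ring] at h
    linarith
  have hsum := intervalIntegral.integral_mono_on hab (hint.add hrefl_int)
    intervalIntegrable_const hpair
  rw [intervalIntegral.integral_add hint hrefl_int, hrefl, intervalIntegral.integral_const,
    smul_eq_mul] at hsum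
  linarith

theorem intervalIntegral_le_of_concaveOn_Ici {ω : ℝ → ℝ} (hnonneg : ∀ t ∈ Ici (0 : ℝ), 0 ≤ ω t)
    (hmono : MonotoneOn ω (Ici 0)) (hconc : ConcaveOn ℝ (Ici 0) ω) {r t : ℝ} (ht₀ : 0 ≤ t)
    (ht : t ≤ 2 * r) : ∫ s in (0 : ℝ)..t, ω s ≤ 2 * r * ω r := by
  have h2r : 0 ≤ 2 * r := ht₀.trans ht
  have hint : IntervalIntegrable ω volume 0 (2 * r) :=
    (hmono.mono fun s hs ↦ by rw [uIcc_of_le h2r] at hs; exact hs.1).intervalIntegrable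
  calc ∫ s in (0 : ℝ)..t, ω s ≤ ∫ s in (0 : ℝ)..(2 * r), ω s :=
        intervalIntegral.integral_mono_interval le_rfl ht₀ ht
          ((ae_restrict_iff' measurableSet_Ioc).2 (.of_forall fun s hs ↦ hnonneg s hs.1.le)) hint
    _ ≤ (2 * r - 0) * ω ((0 + 2 * r) / 2) :=
        (hconc.subset Icc_subset_Ici_self (convex_Icc 0 _)).intervalIntegral_le_mul_midpoint h2r
          hint
    _ = 2 * r * ω r := by ring_nf

section Jet

variable {X : Type*} [NormedAddCommGroup X] [NormedSpace ℝ X]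

theorem norm_midpoint_add_sub_left_le (y z w : X) :
    ‖midpoint ℝ y z + w - y‖ ≤ ‖y - z‖ / 2 + ‖w‖ := by
  calc ‖midpoint ℝ y z + w - y‖ = ‖(midpoint ℝ y z - y) + w‖ := by abel_nf
    _ ≤ ‖midpoint ℝ y z - y‖ + ‖w‖ := norm_add_le _ _
    _ = ‖y - z‖ / 2 + ‖w‖ := by
        rw [← dist_eq_norm, dist_midpoint_left, dist_eq_norm]; norm_num; ring

theorem norm_midpoint_sub_sub_right_le (y z w : X) :
    ‖midpoint ℝ y z - w - z‖ ≤ ‖y - z‖ / 2 + ‖w‖ := by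
  rw [midpoint_comm, norm_sub_rev y z, sub_eq_add_neg _ w, ← norm_neg w]
  exact norm_midpoint_add_sub_left_le z y (-w)

theorem sub_apply_le_of_jet_le {f : X → ℝ} {G : X → X →L[ℝ] ℝ} {y z m w : X} {B : ℝ}
    (h₁ : f z + G z (m + w - z) ≤ f y + G y (m + w - y) + B)
    (h₂ : f y + G y (m - w - y) ≤ f z + G z (m - w - z) + B) :
    (G z - G y) w ≤ B := by
  simp only [map_add, map_sub, sub_apply] at *
  linarith

theorem ContinuousLinearMap.norm_le_of_apply_le {φ : X →L[ℝ] ℝ} {C : ℝ} (hC : 0 ≤ C)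
    (h : ∀ v, ‖v‖ = 1 → φ v ≤ C) : ‖φ‖ ≤ C := by
  refine opNorm_le_of_unit_norm hC fun v hv ↦ abs_le.2 ⟨?_, h v hv⟩
  have := h (-v) (by rwa [norm_neg])
  rw [map_neg] at this
  linarith

end Jet

theorem stmt_7_general {X : Type*} [NormedAddCommGroup X] [NormedSpace ℝ X]
    (ω φ : ℝ → ℝ)
    (hnonneg : ∀ t ∈ Ici (0:ℝ), 0 ≤ ω t)
    (hmono : MonotoneOn ω (Ici (0:ℝ)))
    (hconc : ConcaveOn ℝ (Ici (0:ℝ)) ω)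
    (hφ : ∀ t, φ t = ∫ s in (0:ℝ)..t, ω s)
    (E : Set X) (f : X → ℝ) (G : X → X →L[ℝ] ℝ) (M : ℝ) (hM : 0 ≤ M)
    (hjet : ∀ y ∈ E, ∀ z ∈ E, ∀ x : X,
      f z + G z (x - z) ≤ f y + G y (x - y) + M * φ ‖x - y‖) :
    ∀ y ∈ E, ∀ z ∈ E, ‖G y - G z‖ ≤ 4 / 3 * M * ω ‖y - z‖ := by
  intro y hy z hz
  rcases eq_or_ne y z with rfl | hyz
  · simpa using mul_nonneg (by positivity : (0 : ℝ) ≤ 4 / 3 * M) (hnonneg 0 self_mem_Ici)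
  set r := ‖y - z‖
  have hr : 0 < r := norm_sub_pos_iff.2 hyz
  have hωr : 0 ≤ ω r := hnonneg r hr.le
  have hjet_near : ∀ p ∈ E, ∀ q ∈ E, ∀ x, ‖x - p‖ ≤ 2 * r →
      f q + G q (x - q) ≤ f p + G p (x - p) + M * (2 * r * ω r) := fun p hp q hq x hx ↦
    (hjet p hp q hq x).trans <| by
      gcongr
      exact hφ _ ▸ intervalIntegral_le_of_concaveOn_Ici hnonneg hmono hconc (norm_nonneg _) hx
  rw [norm_sub_rev]
  refine ContinuousLinearMap.norm_le_of_apply_le (by positivity) fun v hv ↦ ?_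
  set w := (3 * r / 2) • v
  have hw : ‖y - z‖ / 2 + ‖w‖ = 2 * r := by
    rw [norm_smul, hv, Real.norm_of_nonneg (by positivity)]; ring
  have key := sub_apply_le_of_jet_le
    (hjet_near y hy z hz _ ((norm_midpoint_add_sub_left_le y z w).trans_eq hw))
    (hjet_near z hz y hy _ ((norm_midpoint_sub_sub_right_le y z w).trans_eq hw))
  rw [map_smul, smul_eq_mul] at key
  exact le_of_mul_le_mul_left (key.trans_eq (by ring)) (by positivity : 0 < 3 * r / 2)

theorem stmt_7 {X : Type*} [NormedAddCommGroup X] [NormedSpace ℝ X]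
    (ω φ : ℝ → ℝ)
    (hnonneg : ∀ t ∈ Ici (0:ℝ), 0 ≤ ω t)
    (hmono : MonotoneOn ω (Ici (0:ℝ)))
    (hconc : ConcaveOn ℝ (Ici (0:ℝ)) ω)
    (h0 : ω 0 = 0)
    (h0' : Filter.Tendsto ω (nhdsWithin 0 (Ioi (0:ℝ))) (nhds 0))
    (hφ : ∀ t, φ t = ∫ s in (0:ℝ)..t, ω s)
    (E : Set X) (f : X → ℝ) (G : X → X →L[ℝ] ℝ) (M : ℝ) (hM : 0 ≤ M)
    (hjet : ∀ y ∈ E, ∀ z ∈ E, ∀ x : X,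
      f z + G z (x - z) ≤ f y + G y (x - y) + M * φ ‖x - y‖) :
    ∀ y ∈ E, ∀ z ∈ E, ‖G y - G z‖ ≤ 4 / 3 * M * ω ‖y - z‖ :=
  stmt_7_general ω φ hnonneg hmono hconc hφ E f G M hM hjet
end

section
/- Let X be a real normed space, 0 < α ≤ 1, E ⊆ X, and (f,G) : E → ℝ × X* a 1-jet satisfying, for some M ≥ 0, f(y) + G(y)(x−y) + (M/(1+α))·‖x−y‖^{1+α} ≥ f(z) + G(z)(x−z) for all y, z ∈ E and x ∈ X. Then ‖G(y) − G(z)‖_* ≤ ((1+α)/(2α))^α · M · ‖y−z‖^α for all y, z ∈ E. -/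
open Set

theorem stmt_8 {X : Type*} [NormedAddCommGroup X] [NormedSpace ℝ X]
    (α : ℝ) (hα : 0 < α) (hα1 : α ≤ 1)
    (E : Set X) (f : X → ℝ) (G : X → X →L[ℝ] ℝ) (M : ℝ) (hM : 0 ≤ M)
    (hjet : ∀ y ∈ E, ∀ z ∈ E, ∀ x : X,
      f z + G z (x - z) ≤ f y + G y (x - y) + M / (1 + α) * ‖x - y‖ ^ (1 + α)) :
    ∀ y ∈ E, ∀ z ∈ E,
      ‖G y - G z‖ ≤ ((1 + α) / (2 * α)) ^ α * M * ‖y - z‖ ^ α := by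
  intro y hy z hz
  have h1α : (0:ℝ) < 1 + α := by linarith
  by_cases hyz : y = z
  · subst hyz
    simp [Real.zero_rpow hα.ne']
  have hd : 0 < ‖y - z‖ := norm_pos_iff.mpr (sub_ne_zero.mpr hyz)
  set d := ‖y - z‖ with hddef
  set C := M / (1 + α) with hCdef
  have hC : 0 ≤ C := div_nonneg hM h1α.le
  set q := ((1 + α) / (2 * α)) ^ α with hqdef
  have hq : 0 ≤ q := Real.rpow_nonneg (by positivity) α
  have half : ‖(2⁻¹ : ℝ)‖ = 2⁻¹ := by
    rw [Real.norm_eq_abs]; norm_num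
  -- main inequality
  have main : ∀ v : X, (G y - G z) v ≤ 2 * C * ((‖v‖ + d) / 2) ^ (1 + α) := by
    intro v
    set x : X := y + (2⁻¹ : ℝ) • ((z - y) - v) with hxdef
    set x' : X := y + (2⁻¹ : ℝ) • ((z - y) + v) with hx'def
    have hxy : x - y = (2⁻¹ : ℝ) • ((z - y) - v) := by rw [hxdef]; abel
    have hx'z : x' - z = (2⁻¹ : ℝ) • (v - (z - y)) := by rw [hx'def]; module
    have hnxy : ‖x - y‖ ≤ (‖v‖ + d) / 2 := by
      rw [hxy, norm_smul, half]
      have h1 := norm_sub_le (z - y) v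
      have hzy : ‖z - y‖ = d := norm_sub_rev z y
      rw [hzy] at h1
      linarith
    have hnx'z : ‖x' - z‖ ≤ (‖v‖ + d) / 2 := by
      rw [hx'z, norm_smul, half]
      have h1 := norm_sub_le v (z - y)
      have hzy : ‖z - y‖ = d := norm_sub_rev z y
      rw [hzy] at h1
      linarith
    have hb1 : ‖x - y‖ ^ (1 + α) ≤ ((‖v‖ + d) / 2) ^ (1 + α) :=
      Real.rpow_le_rpow (norm_nonneg _) hnxy h1α.le
    have hb2 : ‖x' - z‖ ^ (1 + α) ≤ ((‖v‖ + d) / 2) ^ (1 + α) :=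
      Real.rpow_le_rpow (norm_nonneg _) hnx'z h1α.le
    have h1 := hjet y hy z hz x
    have h2 := hjet z hz y hy x'
    have e1 : G y (x' - y) - G y (x - y) = G y v := by
      rw [← map_sub]
      congr 1
      rw [hxdef, hx'def]
      module
    have e2 : G z (x' - z) - G z (x - z) = G z v := by
      rw [← map_sub]
      congr 1
      rw [hxdef, hx'def]
      module
    have hAv : (G y - G z) v = G y v - G z v := by
      simp [ContinuousLinearMap.sub_apply]
    rw [hAv, ← e1, ← e2]
    have hmul1 : C * ‖x - y‖ ^ (1 + α) ≤ C * ((‖v‖ + d) / 2) ^ (1 + α) :=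
      mul_le_mul_of_nonneg_left hb1 hC
    have hmul2 : C * ‖x' - z‖ ^ (1 + α) ≤ C * ((‖v‖ + d) / 2) ^ (1 + α) :=
      mul_le_mul_of_nonneg_left hb2 hC
    linarith
  -- arithmetic identity for the optimal scale
  set t := d / (2 * α) with htdef
  have ht : 0 < t := by positivity
  have harith : 2 * C * ((2 * t + d) / 2) ^ (1 + α) = q * M * d ^ α * (2 * t) := by
    have hb : (0:ℝ) < (1 + α) / (2 * α) := by positivity
    have h2td : (2 * t + d) / 2 = d * ((1 + α) / (2 * α)) := by
      rw [htdef]; field_simp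
    rw [h2td, Real.mul_rpow hd.le hb.le, Real.rpow_add hd 1 α, Real.rpow_one,
      Real.rpow_add hb 1 α, Real.rpow_one, ← hqdef, hCdef, htdef]
    field_simp
  -- bound on each application
  have bound : ∀ w : X, w ≠ 0 → (G y - G z) w ≤ q * M * d ^ α * ‖w‖ := by
    intro w hw
    have hr : 0 < ‖w‖ := norm_pos_iff.mpr hw
    have h := main ((2 * t / ‖w‖) • w)
    rw [map_smul, smul_eq_mul, norm_smul, Real.norm_of_nonneg (by positivity)] at h
    have hnw : 2 * t / ‖w‖ * ‖w‖ = 2 * t := by field_simp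
    rw [hnw, harith] at h
    have h' := mul_le_mul_of_nonneg_left h (by positivity : (0:ℝ) ≤ ‖w‖ / (2 * t))
    calc (G y - G z) w = ‖w‖ / (2 * t) * (2 * t / ‖w‖ * (G y - G z) w) := by
          field_simp
      _ ≤ ‖w‖ / (2 * t) * (q * M * d ^ α * (2 * t)) := h'
      _ = q * M * d ^ α * ‖w‖ := by field_simp
  refine ContinuousLinearMap.opNorm_le_bound _ (by positivity) ?_
  intro v
  rcases eq_or_ne v 0 with rfl | hv
  · simp
  have b1 := bound v hv
  have b2 := bound (-v) (neg_ne_zero.mpr hv)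
  rw [map_neg, norm_neg] at b2
  rw [Real.norm_eq_abs]
  exact abs_le.mpr ⟨by linarith, b1⟩
end

section
/- Let 0 < α ≤ 1, X = ℝ, E = {−1, 1}, F(t) = |t|^{1+α}/(1+α), and (f,G) the restriction of (F, F′) to E. Then lip_α(G,E) = 2^{1−α}, and the smallest constant M ≥ 0 such that f(t) + G(t)(x−t) + (M/(1+α))|x−t|^{1+α} ≥ f(s) + G(s)(x−s) for all t, s ∈ E and x ∈ ℝ equals 2/(1 + 1/α)^α; in particular lip_α(G,E) = ((1+α)/(2α))^α · A_{α,co}(f,G,E). -/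
open Set Real

/-!
On `E = {-1, 1}` we have `G = id`, `F ≡ 1 / (1 + α)`, so the Hölder quotient of `G` is `2 / 2 ^ α`
and the jet inequality for `t ≠ s` reads `2 v - 2 ≤ M / (1 + α) * |v| ^ (1 + α)` with `v = s (x - t)`.
The least such `M` is `2 / c ^ α` with `c = 1 + 1 / α`, the maximiser of `(2 v - 2) / v ^ (1 + α)`:
Bernoulli's inequality at `v / c` gives the bound, and `v = c` shows it cannot be lowered.
-/

lemma two_mul_sub_two_le_rpow {α : ℝ} (hα : 0 < α) (v : ℝ) :
    2 * v - 2 ≤ 2 / (1 + 1 / α) ^ α / (1 + α) * |v| ^ (1 + α) := by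
  set c : ℝ := 1 + 1 / α with hc_def
  have hc : 0 < c := by positivity
  have hcα : 0 < c ^ α := rpow_pos_of_pos hc α
  rcases le_or_gt v 0 with hv | hv
  · have : 0 ≤ 2 / c ^ α / (1 + α) * |v| ^ (1 + α) := by positivity
    linarith
  have bernoulli : 1 + (1 + α) * (v / c - 1) ≤ (1 + (v / c - 1)) ^ (1 + α) :=
    one_add_mul_self_le_rpow_one_add (by linarith [div_pos hv hc]) (by linarith)
  rw [add_sub_cancel, div_rpow hv.le hc.le, rpow_one_add' hc.le (by positivity)] at bernoulli
  rw [abs_of_pos hv]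
  calc 2 * v - 2 = 2 * c / (1 + α) * (1 + (1 + α) * (v / c - 1)) := by
        rw [hc_def]; field_simp; ring
    _ ≤ 2 * c / (1 + α) * (v ^ (1 + α) / (c * c ^ α)) := by gcongr
    _ = 2 / c ^ α / (1 + α) * v ^ (1 + α) := by field_simp

lemma le_of_forall_two_mul_sub_two_le_rpow {α M : ℝ} (hα : 0 < α)
    (hM : ∀ v : ℝ, 2 * v - 2 ≤ M / (1 + α) * |v| ^ (1 + α)) :
    2 / (1 + 1 / α) ^ α ≤ M := by
  set c : ℝ := 1 + 1 / α with hc_def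
  have hc : 0 < c := by positivity
  have hcα : 0 < c ^ α := rpow_pos_of_pos hc α
  have h := hM c
  rw [abs_of_pos hc, rpow_one_add' hc.le (by positivity)] at h
  rw [div_le_iff₀ hcα]
  have e1 : 2 * c - 2 = 2 / α := by rw [hc_def]; ring
  have e2 : M / (1 + α) * (c * c ^ α) = M * c ^ α / α := by rw [hc_def]; field_simp; ring
  rw [e1, e2, div_le_div_iff_of_pos_right hα] at h
  exact h

lemma two_rpow_one_sub_eq_mul {α : ℝ} (hα : 0 < α) :
    (2 : ℝ) ^ (1 - α) = ((1 + α) / (2 * α)) ^ α * (2 / (1 + 1 / α) ^ α) := by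
  have hq : 0 < (1 + α) / (2 * α) := by positivity
  have hc : 1 + 1 / α = 2 * ((1 + α) / (2 * α)) := by field_simp; ring
  have hqα : 0 < ((1 + α) / (2 * α)) ^ α := rpow_pos_of_pos hq α
  rw [hc, mul_rpow zero_le_two hq.le, rpow_sub two_pos, rpow_one]
  field_simp

theorem stmt_9_general (α : ℝ) (hα : 0 < α)
    (F G : ℝ → ℝ)
    (hF : ∀ t, F t = |t| ^ (1 + α) / (1 + α))
    (hG : ∀ t, G t = Real.sign t * |t| ^ α) :
    sSup {r : ℝ | ∃ y ∈ ({-1, 1} : Set ℝ), ∃ z ∈ ({-1, 1} : Set ℝ),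
        y ≠ z ∧ r = |G y - G z| / |y - z| ^ α} = 2 ^ (1 - α) ∧
    IsLeast {M : ℝ | 0 ≤ M ∧ ∀ t ∈ ({-1, 1} : Set ℝ), ∀ s ∈ ({-1, 1} : Set ℝ), ∀ x : ℝ,
        F s + G s * (x - s) ≤ F t + G t * (x - t) + M / (1 + α) * |x - t| ^ (1 + α)}
      (2 / (1 + 1 / α) ^ α) ∧
    (2:ℝ) ^ (1 - α) = ((1 + α) / (2 * α)) ^ α * (2 / (1 + 1 / α) ^ α) := by
  have hF1 : F 1 = 1 / (1 + α) := by simp [hF]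
  have hFm1 : F (-1) = 1 / (1 + α) := by simp [hF]
  have hG1 : G 1 = 1 := by simp [hG]
  have hGm1 : G (-1) = -1 := by simp [hG, Real.sign_of_neg]
  have hquot : |G 1 - G (-1)| / |1 - (-1)| ^ α = 2 ^ (1 - α) := by
    rw [hG1, hGm1, rpow_sub two_pos, rpow_one]; norm_num
  refine ⟨?_, ⟨⟨by positivity, ?_⟩, fun M ⟨_, hM⟩ => ?_⟩, two_rpow_one_sub_eq_mul hα⟩
  · suffices h : {r : ℝ | ∃ y ∈ ({-1, 1} : Set ℝ), ∃ z ∈ ({-1, 1} : Set ℝ),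
        y ≠ z ∧ r = |G y - G z| / |y - z| ^ α} = {2 ^ (1 - α)} by rw [h, csSup_singleton]
    refine eq_singleton_iff_unique_mem.2 ⟨⟨1, by simp, -1, by simp, by norm_num, hquot.symm⟩, ?_⟩
    rintro r ⟨y, hy | hy, z, hz | hz, hne, rfl⟩ <;> subst hy hz
    · exact absurd rfl hne
    · rw [abs_sub_comm, abs_sub_comm (-1 : ℝ)]; exact hquot
    · exact hquot
    · exact absurd rfl hne
  · rintro t (ht | ht) s (hs | hs) x <;> subst ht hs
    · have : 0 ≤ 2 / (1 + 1 / α) ^ α / (1 + α) * |x - -1| ^ (1 + α) := by positivity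
      linarith
    · have := two_mul_sub_two_le_rpow hα (x - -1)
      rw [hF1, hFm1, hG1, hGm1]; linarith
    · have := two_mul_sub_two_le_rpow hα (1 - x)
      rw [hF1, hFm1, hG1, hGm1, abs_sub_comm]; linarith
    · have : 0 ≤ 2 / (1 + 1 / α) ^ α / (1 + α) * |x - 1| ^ (1 + α) := by positivity
      linarith
  · refine le_of_forall_two_mul_sub_two_le_rpow hα fun v => ?_
    have := hM (-1) (by simp) 1 (by simp) (v - 1)
    rw [hF1, hFm1, hG1, hGm1, sub_neg_eq_add, sub_add_cancel] at this
    linarith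

theorem stmt_9 (α : ℝ) (hα : 0 < α) (hα1 : α ≤ 1)
    (F G : ℝ → ℝ)
    (hF : ∀ t, F t = |t| ^ (1 + α) / (1 + α))
    (hG : ∀ t, G t = Real.sign t * |t| ^ α) :
    sSup {r : ℝ | ∃ y ∈ ({-1, 1} : Set ℝ), ∃ z ∈ ({-1, 1} : Set ℝ),
        y ≠ z ∧ r = |G y - G z| / |y - z| ^ α} = 2 ^ (1 - α) ∧
    IsLeast {M : ℝ | 0 ≤ M ∧ ∀ t ∈ ({-1, 1} : Set ℝ), ∀ s ∈ ({-1, 1} : Set ℝ), ∀ x : ℝ,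
        F s + G s * (x - s) ≤ F t + G t * (x - t) + M / (1 + α) * |x - t| ^ (1 + α)}
      (2 / (1 + 1 / α) ^ α) ∧
    (2:ℝ) ^ (1 - α) = ((1 + α) / (2 * α)) ^ α * (2 / (1 + 1 / α) ^ α) :=
  stmt_9_general α hα F G hF hG
end

section
/- Let X be a real Banach space, ω a modulus of continuity, and F ∈ C^{1,ω}(X) a convex function. Then A_{ω,co}(F,DF,X) = sup { (F(x) − F(y) − DF(y)(x−y)) / φ_ω(‖x−y‖) : x, y ∈ X, x ≠ y }. -/
open Set

/-- A differentiable convex function lies above its tangent planes. -/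
lemma tangent_le {X : Type*} [NormedAddCommGroup X] [NormedSpace ℝ X]
    (F : X → ℝ) (hconv : ConvexOn ℝ univ F) (hdiff : Differentiable ℝ F) (z x : X) :
    F z + fderiv ℝ F z (x - z) ≤ F x := by
  set v := x - z with hv
  set L : ℝ →ᵃ[ℝ] X := AffineMap.lineMap z x with hL
  have hLdef : ∀ t : ℝ, L t = z + t • v := by
    intro t
    simp [hL, AffineMap.lineMap_apply, hv]
    abel
  have hg : ConvexOn ℝ univ (F ∘ L) := by
    have := hconv.comp_affineMap L
    simpa using this
  have h1 : HasDerivAt (fun t : ℝ => z + t • v) v 0 := by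
    simpa using ((hasDerivAt_id (0:ℝ)).smul_const v).const_add z
  have h2 : HasDerivAt (F ∘ L) (fderiv ℝ F z v) 0 := by
    have hF : HasFDerivAt F (fderiv ℝ F z) (z + (0:ℝ) • v) := by
      simpa using (hdiff z).hasFDerivAt
    have heq : (F ∘ fun t : ℝ => z + t • v) = F ∘ L := by
      funext t; simp [Function.comp, hLdef t]
    have h2' := hF.comp_hasDerivAt (0:ℝ) h1
    rw [heq] at h2'
    simpa using h2'
  have h3 : fderiv ℝ F z v ≤ slope (F ∘ L) 0 1 :=
    hg.le_slope_of_hasDerivAt (mem_univ _) (mem_univ _) one_pos h2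
  have h4 : slope (F ∘ L) 0 1 = F x - F z := by
    have hzv : z + v = x := by rw [hv]; abel
    rw [slope_def_field]
    simp [hLdef, hzv]
  linarith [h3.trans_eq h4]

lemma sSup_eq_of_dominated {A B : Set ℝ} (hBA : B ⊆ A)
    (hdom : ∀ a ∈ A, ∃ b ∈ B, a ≤ b) : sSup A = sSup B := by
  rcases A.eq_empty_or_nonempty with hA | hA
  · subst hA
    rw [subset_empty_iff.mp hBA]
  by_cases hbd : BddAbove A
  · apply le_antisymm
    · apply csSup_le hA
      intro a' ha'
      obtain ⟨b', hb'B, hab'⟩ := hdom a' ha'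
      exact hab'.trans (le_csSup (hbd.mono hBA) hb'B)
    · exact csSup_le_csSup hbd ⟨_, (hdom _ hA.choose_spec).choose_spec.1⟩ hBA
  · have hbd' : ¬ BddAbove B := by
      intro ⟨c, hc⟩
      exact hbd ⟨c, fun a ha => by
        obtain ⟨b, hbB, hab⟩ := hdom a ha
        exact hab.trans (hc hbB)⟩
    rw [Real.sSup_of_not_bddAbove hbd, Real.sSup_of_not_bddAbove hbd']

theorem stmt_10 {X : Type*} [NormedAddCommGroup X] [NormedSpace ℝ X] [CompleteSpace X]
    (ω φ : ℝ → ℝ)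
    (hnonneg : ∀ t ∈ Ici (0:ℝ), 0 ≤ ω t)
    (hmono : MonotoneOn ω (Ici (0:ℝ)))
    (hconc : ConcaveOn ℝ (Ici (0:ℝ)) ω)
    (h0 : ω 0 = 0)
    (h0' : Filter.Tendsto ω (nhdsWithin 0 (Ioi (0:ℝ))) (nhds 0))
    (hφ : ∀ t, φ t = ∫ s in (0:ℝ)..t, ω s)
    (F : X → ℝ) (hconv : ConvexOn ℝ univ F) (hdiff : Differentiable ℝ F)
    (hC1ω : ∃ M : ℝ, ∀ x z : X, ‖fderiv ℝ F x - fderiv ℝ F z‖ ≤ M * ω ‖x - z‖) :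
    sSup {r : ℝ | ∃ y z x : X, x ≠ y ∧
        r = (F z + fderiv ℝ F z (x - z) - F y - fderiv ℝ F y (x - y)) / φ ‖x - y‖}
      = sSup {r : ℝ | ∃ y x : X, x ≠ y ∧
        r = (F x - F y - fderiv ℝ F y (x - y)) / φ ‖x - y‖} := by
  have hφ0 : ∀ t : ℝ, 0 ≤ t → 0 ≤ φ t := by
    intro t ht
    rw [hφ t]
    exact intervalIntegral.integral_nonneg ht fun u hu => hnonneg u hu.1
  apply sSup_eq_of_dominated
  · rintro r ⟨y, x, hxy, hr⟩
    exact ⟨y, x, x, hxy, by simp [hr]⟩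
  · rintro r ⟨y, z, x, hxy, hr⟩
    refine ⟨(F x - F y - fderiv ℝ F y (x - y)) / φ ‖x - y‖, ⟨y, x, hxy, rfl⟩, ?_⟩
    rw [hr]
    have hnum : F z + fderiv ℝ F z (x - z) - F y - fderiv ℝ F y (x - y)
        ≤ F x - F y - fderiv ℝ F y (x - y) := by
      linarith [tangent_le F hconv hdiff z x]
    rcases eq_or_lt_of_le (hφ0 ‖x - y‖ (norm_nonneg _)) with h | h
    · rw [← h, div_zero, div_zero]
    · gcongr
end

section
/- Let X be a real normed space, ω a modulus of continuity, and F : X → ℝ a convex function of class C^{1,ω}(X) with M := lip_ω(DF,X). Then for all x, y, z ∈ X: F(z) + DF(z)(x−z) ≤ F(y) + DF(y)(x−y) + M·φ_ω(‖x−y‖). In particular A_{ω,co}(F,DF,X) ≤ lip_ω(DF,X). -/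
open Set

/-!
Convexity puts every tangent plane below the graph, so `F z + DF z (x - z) ≤ F x`. Conversely,
along the unit-speed ray from `y` to `x` the derivative of `F` exceeds `DF y` by at most
`M * ω s` at distance `s`, so integrating from `0` to `‖x - y‖` gives
`F x ≤ F y + DF y (x - y) + M * φ ‖x - y‖`.
-/

section

variable {E : Type*} [NormedAddCommGroup E] [NormedSpace ℝ E]

theorem ConvexOn.add_apply_sub_le_of_hasFDerivAt {s : Set E} {F : E → ℝ} {F' : E →L[ℝ] ℝ}
    {x z : E} (hF : ConvexOn ℝ s F) (hz : z ∈ s) (hx : x ∈ s) (hF' : HasFDerivAt F F' z) :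
    F z + F' (x - z) ≤ F x := by
  have hg : ConvexOn ℝ (Icc 0 1) (F ∘ AffineMap.lineMap (k := ℝ) z x) :=
    (hF.comp_affineMap _).subset (fun t ht => hF.1.lineMap_mem hz hx ht) (convex_Icc 0 1)
  have hg' : HasDerivAt (F ∘ AffineMap.lineMap (k := ℝ) z x) (F' (x - z)) 0 :=
    hF'.comp_hasDerivAt_of_eq 0 AffineMap.hasDerivAt_lineMap (AffineMap.lineMap_apply_zero z x).symm
  have hslope := hg.le_slope_of_hasDerivAt (left_mem_Icc.2 zero_le_one)
    (right_mem_Icc.2 zero_le_one) zero_lt_one hg'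
  simp only [slope_def_field, Function.comp_apply, AffineMap.lineMap_apply_zero,
    AffineMap.lineMap_apply_one, sub_zero, div_one] at hslope
  linarith

theorem le_add_apply_sub_add_mul_integral_of_modulus {F : E → ℝ} {F' : E → E →L[ℝ] ℝ}
    (hF : ∀ x, HasFDerivAt F (F' x) x) {ω : ℝ → ℝ} (hω : MonotoneOn ω (Ici 0)) {M : ℝ} {y : E}
    (hM : ∀ z, ‖F' z - F' y‖ ≤ M * ω ‖z - y‖) (x : E) :
    F x ≤ F y + F' y (x - y) + M * ∫ s in (0 : ℝ)..‖x - y‖, ω s := by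
  obtain rfl | hxy := eq_or_ne x y
  · simp
  set r := ‖x - y‖
  have hr : 0 < r := norm_pos_iff.2 (sub_ne_zero.2 hxy)
  set u := r⁻¹ • (x - y)
  have hu : ‖u‖ = 1 := by
    rw [norm_smul, norm_inv, Real.norm_of_nonneg hr.le, inv_mul_cancel₀ hr.ne']
  set g : ℝ → ℝ := fun s => F (y + s • u) - s * F' y u
  have hg : ∀ s, HasDerivAt g (F' (y + s • u) u - F' y u) s := fun s => by
    have hray : HasDerivAt (fun s : ℝ => y + s • u) u s := by
      simpa using ((hasDerivAt_id s).smul_const u).const_add y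
    exact ((hF _).comp_hasDerivAt s hray).sub (hasDerivAt_mul_const (F' y u))
  have hg_le : ∀ s ∈ Ioo 0 r, F' (y + s • u) u - F' y u ≤ M * ω s := fun s hs => by
    calc F' (y + s • u) u - F' y u = (F' (y + s • u) - F' y) u := rfl
      _ ≤ ‖F' (y + s • u) - F' y‖ * ‖u‖ := (le_abs_self _).trans ((F' _ - F' y).le_opNorm u)
      _ ≤ M * ω s := by
        simpa [hu, norm_smul, abs_of_pos hs.1] using hM (y + s • u)
  have hint : MeasureTheory.IntegrableOn (fun s => M * ω s) (Icc 0 r) :=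
    ((hω.mono Icc_subset_Ici_self).integrableOn_isCompact isCompact_Icc).const_mul M
  -- The one-sided fundamental theorem needs only an integrable majorant of `g'`, not `g'` itself.
  have hgr_sub_g0 := intervalIntegral.sub_le_integral_of_hasDeriv_right_of_le hr.le
    (HasDerivAt.continuousOn fun s _ => hg s) (fun s _ => (hg s).hasDerivWithinAt) hint hg_le
  rw [intervalIntegral.integral_const_mul] at hgr_sub_g0
  have hgr : g r = F x - F' y (x - y) := by simp [g, u, hr.ne']
  simp only [hgr, g, zero_smul, add_zero, zero_mul, sub_zero] at hgr_sub_g0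
  linarith

end

theorem stmt_11_general {X : Type*} [NormedAddCommGroup X] [NormedSpace ℝ X]
    (ω φ : ℝ → ℝ)
    (hmono : MonotoneOn ω (Ici (0:ℝ)))
    (hφ : ∀ t, φ t = ∫ s in (0:ℝ)..t, ω s)
    (F : X → ℝ) (hconv : ConvexOn ℝ univ F) (hdiff : Differentiable ℝ F)
    (M : ℝ)
    (hM : ∀ x z : X, ‖fderiv ℝ F x - fderiv ℝ F z‖ ≤ M * ω ‖x - z‖) :
    ∀ x y z : X,
      F z + fderiv ℝ F z (x - z) ≤ F y + fderiv ℝ F y (x - y) + M * φ ‖x - y‖ := by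
  intro x y z
  calc F z + fderiv ℝ F z (x - z) ≤ F x :=
        hconv.add_apply_sub_le_of_hasFDerivAt (mem_univ z) (mem_univ x) (hdiff z).hasFDerivAt
    _ ≤ F y + fderiv ℝ F y (x - y) + M * φ ‖x - y‖ := by
        rw [hφ]
        exact le_add_apply_sub_add_mul_integral_of_modulus (fun x => (hdiff x).hasFDerivAt)
          hmono (fun x => hM x y) x

theorem stmt_11 {X : Type*} [NormedAddCommGroup X] [NormedSpace ℝ X]
    (ω φ : ℝ → ℝ)
    (hnonneg : ∀ t ∈ Ici (0:ℝ), 0 ≤ ω t)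
    (hmono : MonotoneOn ω (Ici (0:ℝ)))
    (hconc : ConcaveOn ℝ (Ici (0:ℝ)) ω)
    (h0 : ω 0 = 0)
    (h0' : Filter.Tendsto ω (nhdsWithin 0 (Ioi (0:ℝ))) (nhds 0))
    (hφ : ∀ t, φ t = ∫ s in (0:ℝ)..t, ω s)
    (F : X → ℝ) (hconv : ConvexOn ℝ univ F) (hdiff : Differentiable ℝ F)
    (M : ℝ)
    (hM : ∀ x z : X, ‖fderiv ℝ F x - fderiv ℝ F z‖ ≤ M * ω ‖x - z‖) :
    ∀ x y z : X,
      F z + fderiv ℝ F z (x - z) ≤ F y + fderiv ℝ F y (x - y) + M * φ ‖x - y‖ :=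
  stmt_11_general ω φ hmono hφ F hconv hdiff M hM
end

section
/- Let X be a real Banach space, ω a modulus of continuity, F : X → ℝ a lower semicontinuous convex function, and A > 0 a constant such that λF(x+(1−λ)h) + (1−λ)F(x−λh) − F(x) ≤ λ(1−λ)·A·φ_ω(‖h‖) for all λ ∈ [0,1] and x, h ∈ X. Then F is Fréchet differentiable everywhere, F(x+h) − F(x) − DF(x)(h) ≤ A·φ_ω(‖h‖) for all x, h ∈ X, and ‖DF(x) − DF(y)‖_* ≤ (4/3)·A·ω(‖x−y‖) for all x, y ∈ X. -/
/-!
The one-sided directional derivative `F'(x; k)` of a convex function is sublinear in `k`. Taking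
`λ = 1/2` in the smoothness inequality bounds the symmetric second difference
`F(x + h) + F(x - h) - 2 F(x)` by `A φ(2‖h‖) / 2 = o(‖h‖)`, which forces `F'(x; k) + F'(x; -k) ≤ 0`,
so `F'(x; ·)` is linear. By Baire's theorem the lower semicontinuous convex `F` is bounded above
near `x`, so this functional is continuous. It is a subgradient, and the smoothness inequality at
`x + t k` shows `F(x + h) - F(x) - F'(x; h) ≤ A φ(‖h‖) = o(‖h‖)`: `F'(x; ·)` is the Fréchet
derivative.

For the estimate on `DF`, the two-sided bounds at `x` and `y` give
`(DF(x) - DF(y)) k ≤ ‖DF(x) - DF(y)‖ ‖x - y‖ / 2 + A φ(‖k‖)`; testing this on `‖k‖ = 2‖x - y‖` and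
using `φ(2δ) ≤ 2δ ω(δ)` (Hermite–Hadamard for the concave `ω`) yields the constant `4/3`.
-/

open Set Filter Topology Asymptotics

section Convex

variable {E : Type*} [AddCommGroup E] [Module ℝ E] {F : E → ℝ}

noncomputable def rightLineDeriv (F : E → ℝ) (x k : E) : ℝ :=
  derivWithin (fun t : ℝ => F (x + t • k)) (Ioi 0) 0

namespace ConvexOn

lemma comp_line (hF : ConvexOn ℝ univ F) (x k : E) :
    ConvexOn ℝ univ (fun t : ℝ => F (x + t • k)) := by
  refine ⟨convex_univ, fun a _ b _ μ ν hμ hν hμν => ?_⟩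
  convert hF.2 (mem_univ (x + a • k)) (mem_univ (x + b • k)) hμ hν hμν using 2
  linear_combination (norm := module) -hμν • x

lemma two_mul_le_add (hF : ConvexOn ℝ univ F) (u v : E) :
    2 * F ((1 / 2 : ℝ) • (u + v)) ≤ F u + F v := by
  have := hF.2 (mem_univ u) (mem_univ v) (by norm_num : (0:ℝ) ≤ 1 / 2)
    (by norm_num : (0:ℝ) ≤ 1 / 2) (by norm_num)
  rw [← smul_add] at this
  simp only [smul_eq_mul] at this
  linarith

lemma tendsto_slope_rightLineDeriv (hF : ConvexOn ℝ univ F) (x k : E) :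
    Tendsto (fun t : ℝ => (F (x + t • k) - F x) / t) (𝓝[>] 0) (𝓝 (rightLineDeriv F x k)) := by
  have := (hF.comp_line x k).hasDerivWithinAt_rightDeriv_of_mem_interior (x := 0) (by simp)
  rw [hasDerivWithinAt_iff_tendsto_slope' (by simp), slope_fun_def_field] at this
  simpa [rightLineDeriv] using this

lemma rightLineDeriv_le_slope (hF : ConvexOn ℝ univ F) (x k : E) {t : ℝ} (ht : 0 < t) :
    rightLineDeriv F x k ≤ (F (x + t • k) - F x) / t := by
  have := (hF.comp_line x k).rightDeriv_le_slope_of_mem_interior (x := 0) (by simp) (mem_univ t) ht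
  simpa [rightLineDeriv, slope_def_field] using this

lemma rightLineDeriv_add_le (hF : ConvexOn ℝ univ F) (x a b : E) :
    rightLineDeriv F x (a + b) ≤ rightLineDeriv F x a + rightLineDeriv F x b := by
  refine ge_of_tendsto ((hF.tendsto_slope_rightLineDeriv x a).add
    (hF.tendsto_slope_rightLineDeriv x b)) ?_
  filter_upwards [self_mem_nhdsWithin] with t (ht : 0 < t)
  have hmid : (1 / 2 : ℝ) • (x + t • a + (x + t • b)) = x + (t / 2) • (a + b) := by module
  have hconv := hF.two_mul_le_add (x + t • a) (x + t • b)
  rw [hmid] at hconv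
  calc rightLineDeriv F x (a + b) ≤ (F (x + (t / 2) • (a + b)) - F x) / (t / 2) :=
        hF.rightLineDeriv_le_slope x _ (by positivity)
    _ ≤ (F (x + t • a) - F x) / t + (F (x + t • b) - F x) / t := by
        rw [← add_div, div_le_div_iff₀ (by positivity) ht]
        linarith [mul_le_mul_of_nonneg_right hconv ht.le]

lemma rightLineDeriv_smul (hF : ConvexOn ℝ univ F) (x k : E) {c : ℝ} (hc : 0 < c) :
    rightLineDeriv F x (c • k) = c * rightLineDeriv F x k := by
  have hscale : Tendsto (fun t : ℝ => c * t) (𝓝[>] 0) (𝓝[>] 0) :=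
    tendsto_nhdsWithin_iff.2 ⟨((continuous_const_mul c).tendsto' 0 0 (mul_zero c)).mono_left
      nhdsWithin_le_nhds, eventually_nhdsWithin_of_forall fun t (ht : 0 < t) => mul_pos hc ht⟩
  refine tendsto_nhds_unique (hF.tendsto_slope_rightLineDeriv x (c • k)) ?_
  refine (((hF.tendsto_slope_rightLineDeriv x k).comp hscale).const_mul c).congr' ?_
  filter_upwards [self_mem_nhdsWithin] with t (ht : 0 < t)
  simp only [Function.comp_apply, smul_smul]
  field_simp

end ConvexOn

lemma exists_linearMap_eq_of_subadditive {p : E → ℝ}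
    (hadd : ∀ a b, p (a + b) ≤ p a + p b) (hsmul : ∀ c : ℝ, 0 < c → ∀ k, p (c • k) = c * p k)
    (hneg : ∀ k, p k + p (-k) ≤ 0) : ∃ L : E →ₗ[ℝ] ℝ, ⇑L = p := by
  have hzero : p 0 = 0 := by
    have := hsmul 2 two_pos 0
    rw [smul_zero] at this
    linarith
  have hpneg : ∀ k, p (-k) = -p k := fun k => by
    have := hadd k (-k)
    rw [add_neg_cancel, hzero] at this
    linarith [hneg k]
  refine ⟨{ toFun := p, map_add' := fun a b => le_antisymm (hadd a b) ?_, map_smul' := ?_ }, rfl⟩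
  · have := hadd (a + b) (-b)
    rw [add_neg_cancel_right, hpneg] at this
    linarith
  · intro c k
    rcases lt_trichotomy c 0 with hc | rfl | hc
    · rw [← neg_smul_neg, hsmul _ (neg_pos.2 hc), hpneg, RingHom.id_apply, smul_eq_mul]
      ring
    · simp [hzero]
    · exact hsmul c hc k

end Convex

section Normed

variable {E : Type*} [NormedAddCommGroup E] [NormedSpace ℝ E] {F : E → ℝ}

lemma LinearMap.exists_bound_of_eventually_le (L : E →ₗ[ℝ] ℝ) {C : ℝ}
    (h : ∀ᶠ k in 𝓝 0, L k ≤ C) : ∃ C', ∀ k, ‖L k‖ ≤ C' * ‖k‖ := by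
  have hneg : ∀ᶠ k in 𝓝 (0 : E), L (-k) ≤ C :=
    (tendsto_neg (0 : E)).eventually (neg_zero (G := E) ▸ h)
  obtain ⟨r, hr, hball⟩ := Metric.eventually_nhds_iff_ball.1 (h.and hneg)
  refine LinearMap.bound_of_ball_bound hr C L fun k hk => ?_
  rw [Real.norm_eq_abs, abs_le]
  obtain ⟨hle, hle'⟩ := hball k hk
  rw [map_neg] at hle'
  constructor <;> linarith

lemma ConvexOn.exists_eventually_le [CompleteSpace E] (hF : ConvexOn ℝ univ F)
    (hlsc : LowerSemicontinuous F) (x : E) : ∃ M, ∀ᶠ y in 𝓝 x, F y ≤ M := by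
  obtain ⟨n, z, hz⟩ := nonempty_interior_of_iUnion_of_closed
    (fun n : ℕ => hlsc.isClosed_preimage n)
    (iUnion_eq_univ_iff.2 fun y => exists_nat_ge (F y))
  have hnear : ∀ᶠ y in 𝓝 x, (2 : ℝ) • (y - x) + z ∈ F ⁻¹' Iic (n : ℝ) := by
    have hcont : Tendsto (fun y : E => (2 : ℝ) • (y - x) + z) (𝓝 x) (𝓝 z) := by
      simpa using (show Continuous (fun y : E => (2 : ℝ) • (y - x) + z) by fun_prop).tendsto x
    exact (hcont.eventually (isOpen_interior.mem_nhds hz)).mono fun y hy => interior_subset hy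
  refine ⟨(n + F ((2 : ℝ) • x - z)) / 2, hnear.mono fun y hy => ?_⟩
  have hmid : (1 / 2 : ℝ) • ((2 : ℝ) • (y - x) + z + ((2 : ℝ) • x - z)) = y := by module
  have := hF.two_mul_le_add ((2 : ℝ) • (y - x) + z) ((2 : ℝ) • x - z)
  rw [hmid] at this
  have hy' : F ((2 : ℝ) • (y - x) + z) ≤ n := hy
  linarith

lemma hasFDerivAt_of_le_of_le {ψ : ℝ → ℝ} (hψ : ψ =o[𝓝[≥] 0] id) {x : E} (L : E →L[ℝ] ℝ)
    (hle : ∀ k, L k ≤ F (x + k) - F x) (hge : ∀ k, F (x + k) - F x - L k ≤ ψ ‖k‖) :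
    HasFDerivAt F L x := by
  have hnorm : Tendsto (fun k : E => ‖k‖) (𝓝 0) (𝓝[≥] 0) :=
    tendsto_nhdsWithin_iff.2 ⟨tendsto_norm_zero, Eventually.of_forall fun k => norm_nonneg k⟩
  rw [hasFDerivAt_iff_isLittleO_nhds_zero, ← isLittleO_norm_right]
  refine (IsBigO.of_bound 1 (Eventually.of_forall fun k => ?_)).trans_isLittleO
    (hψ.comp_tendsto hnorm)
  rw [one_mul, Real.norm_eq_abs, Real.norm_eq_abs, abs_of_nonneg (by linarith [hle k])]
  exact (hge k).trans (le_abs_self _)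

lemma opNorm_mul_le_of_forall_apply_le (T : E →L[ℝ] ℝ) {r C : ℝ} (hr : 0 ≤ r)
    (h : ∀ k, ‖k‖ ≤ r → T k ≤ C) : ‖T‖ * r ≤ C := by
  have hC : 0 ≤ C := by simpa using h 0 (by simpa using hr)
  rcases hr.eq_or_lt with rfl | hr
  · simpa using hC
  rw [← le_div_iff₀ hr]
  refine T.opNorm_le_of_unit_norm (by positivity) fun u hu => ?_
  have hru : ‖r • u‖ = r := by rw [norm_smul, hu, Real.norm_of_nonneg hr.le, mul_one]
  have h₁ := h (r • u) hru.le
  have h₂ := h (-(r • u)) (by rw [norm_neg, hru])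
  rw [map_smul, smul_eq_mul] at h₁
  rw [map_neg, map_smul, smul_eq_mul] at h₂
  rw [Real.norm_eq_abs, le_div_iff₀ hr]
  rcases abs_cases (T u) with ⟨habs, -⟩ | ⟨habs, -⟩ <;> rw [habs] <;> linarith

def UniformlySmoothWith (F : E → ℝ) (ψ : ℝ → ℝ) : Prop :=
  ∀ l ∈ Icc (0 : ℝ) 1, ∀ x h : E,
    l * F (x + (1 - l) • h) + (1 - l) * F (x - l • h) - F x ≤ l * (1 - l) * ψ ‖h‖

namespace UniformlySmoothWith

variable {ψ : ℝ → ℝ}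

lemma sub_sub_le_slope (hs : UniformlySmoothWith F ψ) (x k : E) {t : ℝ} (ht : t ∈ Ioc 0 1) :
    F (x + k) - F x - (1 - t) * ψ ‖k‖ ≤ (F (x + t • k) - F x) / t := by
  have h := hs t (Ioc_subset_Icc_self ht) (x + t • k) k
  rw [show x + t • k + (1 - t) • k = x + k by module, add_sub_cancel_right] at h
  rw [le_div_iff₀ ht.1]
  linarith

lemma add_sub_two_mul_le (hs : UniformlySmoothWith F ψ) (x h : E) :
    F (x + h) + F (x - h) - 2 * F x ≤ ψ (2 * ‖h‖) / 2 := by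
  have hmid := hs (1 / 2) ⟨by norm_num, by norm_num⟩ x ((2 : ℝ) • h)
  rw [show x + (1 - 1 / 2 : ℝ) • (2 : ℝ) • h = x + h by module,
    show x - (1 / 2 : ℝ) • (2 : ℝ) • h = x - h by module, norm_smul, Real.norm_two] at hmid
  linarith

lemma sub_le_rightLineDeriv (hs : UniformlySmoothWith F ψ) (hF : ConvexOn ℝ univ F) (x k : E) :
    F (x + k) - F x - ψ ‖k‖ ≤ rightLineDeriv F x k := by
  have hlim : Tendsto (fun t : ℝ => F (x + k) - F x - (1 - t) * ψ ‖k‖) (𝓝[>] 0)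
      (𝓝 (F (x + k) - F x - ψ ‖k‖)) := by
    refine tendsto_nhdsWithin_of_tendsto_nhds ?_
    simpa using (show Continuous fun t : ℝ => F (x + k) - F x - (1 - t) * ψ ‖k‖ by
      fun_prop).tendsto 0
  refine le_of_tendsto_of_tendsto hlim (hF.tendsto_slope_rightLineDeriv x k) ?_
  filter_upwards [Ioo_mem_nhdsGT one_pos] with t ht
  exact hs.sub_sub_le_slope x k (Ioo_subset_Ioc_self ht)

lemma rightLineDeriv_add_neg_le (hs : UniformlySmoothWith F ψ) (hF : ConvexOn ℝ univ F)
    (hψ : ψ =o[𝓝[≥] 0] id) (x k : E) :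
    rightLineDeriv F x k + rightLineDeriv F x (-k) ≤ 0 := by
  have hscale : Tendsto (fun t : ℝ => 2 * t * ‖k‖) (𝓝[>] 0) (𝓝[≥] 0) := by
    refine tendsto_nhdsWithin_iff.2 ⟨tendsto_nhdsWithin_of_tendsto_nhds ?_,
      eventually_nhdsWithin_of_forall fun t (ht : 0 < t) => mem_Ici.2 (by positivity)⟩
    simpa using (show Continuous fun t : ℝ => 2 * t * ‖k‖ by fun_prop).tendsto 0
  have hsmall : Tendsto (fun t : ℝ => ψ (2 * t * ‖k‖) / (2 * t)) (𝓝[>] 0) (𝓝 0) := by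
    refine ((hψ.comp_tendsto hscale).trans_isBigO ?_).tendsto_div_nhds_zero
    exact IsBigO.of_bound ‖k‖ (Eventually.of_forall fun t => by
      simp only [Function.comp_apply, id, norm_mul, norm_norm]
      exact (mul_comm _ _).le)
  refine le_of_tendsto_of_tendsto ((hF.tendsto_slope_rightLineDeriv x k).add
    (hF.tendsto_slope_rightLineDeriv x (-k))) hsmall ?_
  filter_upwards [self_mem_nhdsWithin] with t (ht : 0 < t)
  have h := hs.add_sub_two_mul_le x (t • k)
  rw [norm_smul, Real.norm_of_nonneg ht.le, ← mul_assoc] at h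
  rw [smul_neg, ← sub_eq_add_neg, ← add_div, div_le_div_iff₀ ht (by positivity)]
  nlinarith

lemma exists_hasFDerivAt [CompleteSpace E] (hs : UniformlySmoothWith F ψ)
    (hF : ConvexOn ℝ univ F) (hlsc : LowerSemicontinuous F) (hψ : ψ =o[𝓝[≥] 0] id) (x : E) :
    ∃ L : E →L[ℝ] ℝ, HasFDerivAt F L x ∧ (∀ k, L k ≤ F (x + k) - F x) ∧
      ∀ k, F (x + k) - F x - L k ≤ ψ ‖k‖ := by
  obtain ⟨L, hL⟩ := exists_linearMap_eq_of_subadditive (hF.rightLineDeriv_add_le x)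
    (fun c hc k => hF.rightLineDeriv_smul x k hc) (hs.rightLineDeriv_add_neg_le hF hψ x)
  have hle : ∀ k, L k ≤ F (x + k) - F x := fun k => by
    simpa [hL] using hF.rightLineDeriv_le_slope x k one_pos
  have hge : ∀ k, F (x + k) - F x - L k ≤ ψ ‖k‖ := fun k => by
    linarith [hL ▸ hs.sub_le_rightLineDeriv hF x k]
  obtain ⟨M, hM⟩ := hF.exists_eventually_le hlsc x
  have hnear : ∀ᶠ k in 𝓝 (0 : E), L k ≤ M - F x := by
    have hx : Tendsto (fun k : E => x + k) (𝓝 0) (𝓝 x) := by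
      simpa using (continuous_const_add x).tendsto 0
    filter_upwards [hx.eventually hM] with k hk
    linarith [hle k]
  let L' := L.mkContinuousOfExistsBound (L.exists_bound_of_eventually_le hnear)
  exact ⟨L', hasFDerivAt_of_le_of_le hψ L' hle hge, hle, hge⟩

end UniformlySmoothWith

lemma mul_norm_sub_le_of_le_of_le {ψ : ℝ → ℝ} (hψ : MonotoneOn ψ (Ici 0)) {x y : E}
    {L L' : E →L[ℝ] ℝ}
    (hLx : ∀ k, L k ≤ F (x + k) - F x) (hLx' : ∀ k, F (x + k) - F x - L k ≤ ψ ‖k‖)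
    (hLy : ∀ k, L' k ≤ F (y + k) - F y) (hLy' : ∀ k, F (y + k) - F y - L' k ≤ ψ ‖k‖) :
    3 / 2 * ‖x - y‖ * ‖L - L'‖ ≤ ψ (2 * ‖x - y‖) := by
  -- `α = F x - F y - L' (x - y)` and `β = F y - F x - L (y - x)` both bound `(L - L') k - ψ ‖k‖`,
  -- and `α + β = (L - L') (x - y)`.
  have hkey : ∀ k, (L - L') k ≤ ‖L - L'‖ * ‖x - y‖ / 2 + ψ ‖k‖ := by
    intro k
    have h₁ := hLx (y - x + k)
    have h₂ := hLy' k
    have h₃ := hLy (x - y - k)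
    have h₄ := hLx' (-k)
    rw [show x + (y - x + k) = y + k by abel] at h₁
    rw [show y + (x - y - k) = x + -k by abel] at h₃
    rw [norm_neg] at h₄
    have hT : (L - L') (x - y) ≤ ‖L - L'‖ * ‖x - y‖ :=
      (le_abs_self _).trans ((L - L').le_opNorm _)
    simp only [map_add, map_sub, map_neg, FunLike.coe_sub, Pi.sub_apply] at h₁ h₃ h₄ hT ⊢
    linarith
  have := opNorm_mul_le_of_forall_apply_le (L - L') (r := 2 * ‖x - y‖)
    (C := ‖L - L'‖ * ‖x - y‖ / 2 + ψ (2 * ‖x - y‖)) (by positivity)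
    fun k hk => (hkey k).trans
      (by gcongr; exact hψ (norm_nonneg k) (mem_Ici.2 (by positivity)) hk)
  linarith

end Normed

section Modulus

variable {ω : ℝ → ℝ}

lemma intervalIntegrable_of_monotoneOn (hmono : MonotoneOn ω (Ici 0)) {t : ℝ} (ht : 0 ≤ t) :
    IntervalIntegrable ω MeasureTheory.volume 0 t := by
  refine (hmono.mono ?_).intervalIntegrable
  rw [uIcc_of_le ht]
  exact Icc_subset_Ici_self

lemma monotoneOn_integral_of_nonneg (hmono : MonotoneOn ω (Ici 0))
    (hnonneg : ∀ t, 0 ≤ t → 0 ≤ ω t) : MonotoneOn (fun t => ∫ s in (0 : ℝ)..t, ω s) (Ici 0) := by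
  intro s hs t ht hst
  refine intervalIntegral.integral_mono_interval le_rfl hs hst
    ((MeasureTheory.ae_restrict_iff' measurableSet_Ioc).2
      (Eventually.of_forall fun u hu => hnonneg u hu.1.le))
    (intervalIntegrable_of_monotoneOn hmono ht)

lemma integral_le_mul_of_monotoneOn (hmono : MonotoneOn ω (Ici 0)) {t : ℝ} (ht : 0 ≤ t) :
    ∫ s in (0 : ℝ)..t, ω s ≤ t * ω t := by
  calc ∫ s in (0 : ℝ)..t, ω s ≤ ∫ _ in (0 : ℝ)..t, ω t :=
        intervalIntegral.integral_mono_on ht (intervalIntegrable_of_monotoneOn hmono ht)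
          intervalIntegrable_const fun u hu => hmono hu.1 ht hu.2
    _ = t * ω t := by simp

lemma ConcaveOn.integral_le_mul_midpoint {f : ℝ → ℝ} {a b : ℝ} (hf : ConcaveOn ℝ (Icc a b) f)
    (hint : IntervalIntegrable f MeasureTheory.volume a b) (hab : a ≤ b) :
    ∫ x in a..b, f x ≤ (b - a) * f ((a + b) / 2) := by
  have hrefl : ∫ x in a..b, f (a + b - x) = ∫ x in a..b, f x := by
    simp [intervalIntegral.integral_comp_sub_left]
  have hint' : IntervalIntegrable (fun x => f (a + b - x)) MeasureTheory.volume a b := by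
    simpa using (hint.comp_sub_left (a + b)).symm
  have hsum : ∫ x in a..b, (f x + f (a + b - x)) ≤ ∫ _ in a..b, 2 * f ((a + b) / 2) := by
    refine intervalIntegral.integral_mono_on hab (hint.add hint') intervalIntegrable_const
      fun x hx => ?_
    have hx' : a + b - x ∈ Icc a b := ⟨by linarith [hx.2], by linarith [hx.1]⟩
    have := hf.2 hx hx' (by norm_num : (0 : ℝ) ≤ 1 / 2) (by norm_num : (0 : ℝ) ≤ 1 / 2)
      (by norm_num)
    simp only [smul_eq_mul] at this
    rw [show 1 / 2 * x + 1 / 2 * (a + b - x) = (a + b) / 2 by ring] at this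
    linarith
  rw [intervalIntegral.integral_add hint hint', hrefl, intervalIntegral.integral_const,
    smul_eq_mul] at hsum
  linarith

lemma isLittleO_integral_of_tendsto (hmono : MonotoneOn ω (Ici 0))
    (hnonneg : ∀ t, 0 ≤ t → 0 ≤ ω t) (h0 : ω 0 = 0) (h0' : Tendsto ω (𝓝[>] 0) (𝓝 0)) :
    (fun t => ∫ s in (0 : ℝ)..t, ω s) =o[𝓝[≥] 0] id := by
  have hω : Tendsto ω (𝓝[≥] 0) (𝓝 0) := by
    have : ContinuousWithinAt ω (Ioi 0) 0 := by rwa [ContinuousWithinAt, h0]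
    simpa [ContinuousWithinAt, h0] using continuousWithinAt_Ioi_iff_Ici.1 this
  have hsmall : (fun t => t * ω t) =o[𝓝[≥] 0] fun t => t := by
    simpa using (isBigO_refl id (𝓝[≥] (0 : ℝ))).mul_isLittleO ((isLittleO_one_iff ℝ).2 hω)
  refine IsBigO.trans_isLittleO (IsBigO.of_bound 1 ?_) hsmall
  filter_upwards [self_mem_nhdsWithin] with t (ht : 0 ≤ t)
  have hpos : 0 ≤ ∫ s in (0 : ℝ)..t, ω s :=
    intervalIntegral.integral_nonneg ht fun u hu => hnonneg u hu.1
  rw [one_mul, Real.norm_of_nonneg hpos, Real.norm_of_nonneg (mul_nonneg ht (hnonneg t ht))]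
  exact integral_le_mul_of_monotoneOn hmono ht

end Modulus

theorem stmt_12_general {X : Type*} [NormedAddCommGroup X] [NormedSpace ℝ X] [CompleteSpace X]
    (ω φ : ℝ → ℝ)
    (hmono : MonotoneOn ω (Ici (0:ℝ)))
    (hconc : ConcaveOn ℝ (Ici (0:ℝ)) ω)
    (h0 : ω 0 = 0)
    (h0' : Filter.Tendsto ω (nhdsWithin 0 (Ioi (0:ℝ))) (nhds 0))
    (hφ : ∀ t, φ t = ∫ s in (0:ℝ)..t, ω s)
    (F : X → ℝ) (hlsc : LowerSemicontinuous F) (hconv : ConvexOn ℝ univ F)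
    (A : ℝ) (hA : 0 < A)
    (hsmooth : ∀ l ∈ Icc (0:ℝ) 1, ∀ x h : X,
      l * F (x + (1 - l) • h) + (1 - l) * F (x - l • h) - F x
        ≤ l * (1 - l) * A * φ ‖h‖) :
    Differentiable ℝ F ∧
    (∀ x h : X, F (x + h) - F x - fderiv ℝ F x h ≤ A * φ ‖h‖) ∧
    (∀ x y : X, ‖fderiv ℝ F x - fderiv ℝ F y‖ ≤ 4 / 3 * A * ω ‖x - y‖) := by
  obtain rfl : φ = fun t => ∫ s in (0:ℝ)..t, ω s := funext hφ
  have hnonneg : ∀ t, 0 ≤ t → 0 ≤ ω t := fun t ht => h0 ▸ hmono self_mem_Ici ht ht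
  have hs : UniformlySmoothWith F fun t => A * ∫ s in (0:ℝ)..t, ω s := fun l hl x h => by
    simpa only [mul_assoc] using hsmooth l hl x h
  have hψ := (isLittleO_integral_of_tendsto hmono hnonneg h0 h0').const_mul_left A
  choose L hL hLle hLge using hs.exists_hasFDerivAt hconv hlsc hψ
  have hfderiv : ∀ x, fderiv ℝ F x = L x := fun x => (hL x).fderiv
  refine ⟨fun x => (hL x).differentiableAt, fun x h => hfderiv x ▸ hLge x h, fun x y => ?_⟩
  rw [hfderiv, hfderiv]
  rcases (norm_nonneg (x - y)).eq_or_lt with hδ | hδ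
  · obtain rfl := norm_sub_eq_zero_iff.1 hδ.symm
    simp [h0]
  have hψmono : MonotoneOn (fun t => A * ∫ s in (0:ℝ)..t, ω s) (Ici 0) := fun a ha b hb hab =>
    mul_le_mul_of_nonneg_left (monotoneOn_integral_of_nonneg hmono hnonneg ha hb hab) hA.le
  have hgrad := mul_norm_sub_le_of_le_of_le hψmono (hLle x) (hLge x) (hLle y) (hLge y)
  have hmid := (hconc.subset Icc_subset_Ici_self (convex_Icc 0 (2 * ‖x - y‖)))
    |>.integral_le_mul_midpoint (intervalIntegrable_of_monotoneOn hmono (by positivity))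
      (by positivity)
  rw [zero_add, sub_zero, mul_div_cancel_left₀ _ two_ne_zero] at hmid
  refine le_of_mul_le_mul_left ?_ (by positivity : (0:ℝ) < 3 / 2 * ‖x - y‖)
  calc 3 / 2 * ‖x - y‖ * ‖L x - L y‖ ≤ A * ∫ s in (0:ℝ)..2 * ‖x - y‖, ω s := hgrad
    _ ≤ A * (2 * ‖x - y‖ * ω ‖x - y‖) := by gcongr
    _ = 3 / 2 * ‖x - y‖ * (4 / 3 * A * ω ‖x - y‖) := by ring

theorem stmt_12 {X : Type*} [NormedAddCommGroup X] [NormedSpace ℝ X] [CompleteSpace X]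
    (ω φ : ℝ → ℝ)
    (hnonneg : ∀ t ∈ Ici (0:ℝ), 0 ≤ ω t)
    (hmono : MonotoneOn ω (Ici (0:ℝ)))
    (hconc : ConcaveOn ℝ (Ici (0:ℝ)) ω)
    (h0 : ω 0 = 0)
    (h0' : Filter.Tendsto ω (nhdsWithin 0 (Ioi (0:ℝ))) (nhds 0))
    (hφ : ∀ t, φ t = ∫ s in (0:ℝ)..t, ω s)
    (F : X → ℝ) (hlsc : LowerSemicontinuous F) (hconv : ConvexOn ℝ univ F)
    (A : ℝ) (hA : 0 < A)
    (hsmooth : ∀ l ∈ Icc (0:ℝ) 1, ∀ x h : X,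
      l * F (x + (1 - l) • h) + (1 - l) * F (x - l • h) - F x
        ≤ l * (1 - l) * A * φ ‖h‖) :
    Differentiable ℝ F ∧
    (∀ x h : X, F (x + h) - F x - fderiv ℝ F x h ≤ A * φ ‖h‖) ∧
    (∀ x y : X, ‖fderiv ℝ F x - fderiv ℝ F y‖ ≤ 4 / 3 * A * ω ‖x - y‖) :=
  stmt_12_general ω φ hmono hconc h0 h0' hφ F hlsc hconv A hA hsmooth
end

section
/- Let X be a real Banach space, L > 0, and g : X → ℝ a function admitting a convex L-Lipschitz minorant. Define F := conv(g) (the convex envelope) and F_L := conv_L(g) := sup{ h : h convex, L-Lipschitz, h ≤ g on X }. Then F_L(x) = inf{ F(y) + L‖x−y‖ : y ∈ X } for every x ∈ X. -/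
open Set

theorem stmt_13 {X : Type*} [NormedAddCommGroup X] [NormedSpace ℝ X]
    (L : ℝ) (hL : 0 < L) (g : X → ℝ)
    (hmin : ∃ m : X → ℝ, ConvexOn ℝ univ m ∧ (∀ u v : X, |m u - m v| ≤ L * ‖u - v‖) ∧
      ∀ u, m u ≤ g u)
    (F FL : X → ℝ)
    (hF : ∀ x, F x = sSup {r : ℝ | ∃ h : X → ℝ, ConvexOn ℝ univ h ∧ Continuous h ∧
      (∀ u, h u ≤ g u) ∧ r = h x})
    (hFL : ∀ x, FL x = sSup {r : ℝ | ∃ h : X → ℝ, ConvexOn ℝ univ h ∧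
      (∀ u v : X, |h u - h v| ≤ L * ‖u - v‖) ∧ (∀ u, h u ≤ g u) ∧ r = h x}) :
    ∀ x : X, FL x = sInf {r : ℝ | ∃ y : X, r = F y + L * ‖x - y‖} := by
  obtain ⟨m, hmconv, hmlip, hmg⟩ := hmin
  -- Lipschitz functions are continuous
  have hcont : ∀ h : X → ℝ, (∀ u v : X, |h u - h v| ≤ L * ‖u - v‖) → Continuous h := by
    intro h hlip
    have : LipschitzWith (Real.toNNReal L) h := by
      apply LipschitzWith.of_dist_le_mul
      intro u v
      have := hlip u v
      simpa [dist_eq_norm, Real.norm_eq_abs, Real.coe_toNNReal L hL.le] using this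
    exact this.continuous
  have hmcont : Continuous m := hcont m hmlip
  set T : X → Set ℝ := fun x => {r : ℝ | ∃ h : X → ℝ, ConvexOn ℝ univ h ∧ Continuous h ∧
      (∀ u, h u ≤ g u) ∧ r = h x} with hTdef
  have hTne : ∀ x, (T x).Nonempty := fun x => ⟨m x, m, hmconv, hmcont, hmg, rfl⟩
  have hTbdd : ∀ x, BddAbove (T x) := by
    intro x
    refine ⟨g x, ?_⟩
    rintro r ⟨h, _, _, hle, rfl⟩
    exact hle x
  have hhF : ∀ h : X → ℝ, ConvexOn ℝ univ h → Continuous h → (∀ u, h u ≤ g u) →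
      ∀ x, h x ≤ F x := by
    intro h hc hct hle x
    rw [hF]
    exact le_csSup (hTbdd x) ⟨h, hc, hct, hle, rfl⟩
  have hFg : ∀ x, F x ≤ g x := by
    intro x
    rw [hF]
    apply csSup_le (hTne x)
    rintro r ⟨h, _, _, hle, rfl⟩
    exact hle x
  -- F is convex
  have hFconv : ConvexOn ℝ univ F := by
    refine ⟨convex_univ, fun a _ b _ ta tb hta htb hab => ?_⟩
    rw [hF]
    apply csSup_le (hTne _)
    rintro r ⟨h, hc, hct, hle, rfl⟩
    calc h (ta • a + tb • b) ≤ ta • h a + tb • h b :=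
          hc.2 (mem_univ a) (mem_univ b) hta htb hab
      _ ≤ ta • F a + tb • F b := by
          simp only [smul_eq_mul]
          exact add_le_add (mul_le_mul_of_nonneg_left (hhF h hc hct hle a) hta)
            (mul_le_mul_of_nonneg_left (hhF h hc hct hle b) htb)
  -- the inf-convolution
  set S : X → Set ℝ := fun z => {r : ℝ | ∃ y : X, r = F y + L * ‖z - y‖} with hSdef
  have hSne : ∀ x, (S x).Nonempty := fun x => ⟨F x + L * ‖x - x‖, x, rfl⟩
  have hSbdd : ∀ x, BddBelow (S x) := by
    intro x
    refine ⟨m x, ?_⟩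
    rintro r ⟨y, rfl⟩
    have h1 : m x - m y ≤ L * ‖x - y‖ := (abs_le.mp (hmlip x y)).2
    have h2 : m y ≤ F y := hhF m hmconv hmcont hmg y
    linarith
  set G : X → ℝ := fun x => sInf (S x) with hGdef
  have hGle : ∀ x y : X, G x ≤ F y + L * ‖x - y‖ := fun x y => csInf_le (hSbdd x) ⟨y, rfl⟩
  have hGF : ∀ x, G x ≤ F x := by
    intro x
    have := hGle x x
    simpa using this
  have hGg : ∀ x, G x ≤ g x := fun x => (hGF x).trans (hFg x)
  -- G is L-Lipschitz
  have hGlip1 : ∀ u v : X, G u ≤ G v + L * ‖u - v‖ := by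
    intro u v
    have key : G u - L * ‖u - v‖ ≤ G v := by
      apply le_csInf (hSne v)
      rintro r ⟨y, rfl⟩
      have h1 := hGle u y
      have htri : ‖u - y‖ ≤ ‖u - v‖ + ‖v - y‖ := norm_sub_le_norm_sub_add_norm_sub u v y
      nlinarith [mul_le_mul_of_nonneg_left htri hL.le]
    linarith
  have hGlip : ∀ u v : X, |G u - G v| ≤ L * ‖u - v‖ := by
    intro u v
    rw [abs_le]
    constructor
    · have := hGlip1 v u
      rw [norm_sub_rev] at this
      linarith
    · have := hGlip1 u v
      linarith
  -- G is convex
  have hGconv : ConvexOn ℝ univ G := by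
    refine ⟨convex_univ, fun a _ b _ ta tb hta htb hab => ?_⟩
    simp only [smul_eq_mul]
    apply le_of_forall_pos_le_add
    intro ε hε
    obtain ⟨ra, hra, hralt⟩ : ∃ r ∈ S a, r < G a + ε :=
      exists_lt_of_csInf_lt (hSne a) (by linarith [lt_add_of_pos_right (G a) hε])
    obtain ⟨rb, hrb, hrblt⟩ : ∃ r ∈ S b, r < G b + ε :=
      exists_lt_of_csInf_lt (hSne b) (by linarith [lt_add_of_pos_right (G b) hε])
    obtain ⟨ya, hya⟩ := hra
    obtain ⟨yb, hyb⟩ := hrb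
    have hFy : F (ta • ya + tb • yb) ≤ ta * F ya + tb * F yb := by
      have := hFconv.2 (mem_univ ya) (mem_univ yb) hta htb hab
      simpa [smul_eq_mul] using this
    have hnorm : ‖(ta • a + tb • b) - (ta • ya + tb • yb)‖ ≤
        ta * ‖a - ya‖ + tb * ‖b - yb‖ := by
      have heq : (ta • a + tb • b) - (ta • ya + tb • yb) = ta • (a - ya) + tb • (b - yb) := by
        rw [smul_sub, smul_sub]; abel
      rw [heq]
      calc ‖ta • (a - ya) + tb • (b - yb)‖ ≤ ‖ta • (a - ya)‖ + ‖tb • (b - yb)‖ :=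
            norm_add_le _ _
        _ = ta * ‖a - ya‖ + tb * ‖b - yb‖ := by
            rw [norm_smul, norm_smul, Real.norm_eq_abs, Real.norm_eq_abs,
              abs_of_nonneg hta, abs_of_nonneg htb]
    have hmain : G (ta • a + tb • b) ≤ ta * ra + tb * rb := by
      calc G (ta • a + tb • b) ≤ F (ta • ya + tb • yb) +
            L * ‖(ta • a + tb • b) - (ta • ya + tb • yb)‖ := hGle _ _
        _ ≤ ta * F ya + tb * F yb + L * (ta * ‖a - ya‖ + tb * ‖b - yb‖) := by
            have := mul_le_mul_of_nonneg_left hnorm hL.le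
            linarith
        _ = ta * (F ya + L * ‖a - ya‖) + tb * (F yb + L * ‖b - yb‖) := by ring
        _ = ta * ra + tb * rb := by rw [hya, hyb]
    have h1 : ta * ra ≤ ta * (G a + ε) := mul_le_mul_of_nonneg_left hralt.le hta
    have h2 : tb * rb ≤ tb * (G b + ε) := mul_le_mul_of_nonneg_left hrblt.le htb
    nlinarith
  -- conclusion
  intro x
  show FL x = sInf (S x)
  rw [hFL]
  apply le_antisymm
  · refine csSup_le ?_ ?_
    · exact ⟨m x, m, hmconv, hmlip, hmg, rfl⟩
    rintro r ⟨h, hc, hlip, hle, rfl⟩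
    apply le_csInf (hSne x)
    rintro r' ⟨y, rfl⟩
    have h1 : h x - h y ≤ L * ‖x - y‖ := (abs_le.mp (hlip x y)).2
    have h2 : h y ≤ F y := hhF h hc (hcont h hlip) hle y
    linarith
  · refine le_csSup ⟨g x, ?_⟩ ⟨G, hGconv, hGlip, hGg, rfl⟩
    rintro r ⟨h, _, _, hle, rfl⟩
    exact hle x
end

section
/- Let X be a real Banach space, L > 0, g : X → ℝ with a convex L-Lipschitz minorant, ω a modulus of continuity, and κ > 0 such that λg(x+(1−λ)h) + (1−λ)g(x−λh) − g(x) ≤ λ(1−λ)·κ·φ_ω(‖h‖) for all λ ∈ [0,1] and x, h ∈ X. Then the convex L-Lipschitz envelope F_L := conv_L(g) satisfies the same inequality: λF_L(x+(1−λ)h) + (1−λ)F_L(x−λh) − F_L(x) ≤ λ(1−λ)·κ·φ_ω(‖h‖) for all λ ∈ [0,1], x, h ∈ X. -/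
open Set

theorem stmt_14 {X : Type*} [NormedAddCommGroup X] [NormedSpace ℝ X]
    (ω φ : ℝ → ℝ)
    (hnonneg : ∀ t ∈ Ici (0:ℝ), 0 ≤ ω t)
    (hmono : MonotoneOn ω (Ici (0:ℝ)))
    (hconc : ConcaveOn ℝ (Ici (0:ℝ)) ω)
    (h0 : ω 0 = 0)
    (h0' : Filter.Tendsto ω (nhdsWithin 0 (Ioi (0:ℝ))) (nhds 0))
    (hφ : ∀ t, φ t = ∫ s in (0:ℝ)..t, ω s)
    (L : ℝ) (hL : 0 < L) (g : X → ℝ)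
    (hmin : ∃ m : X → ℝ, ConvexOn ℝ univ m ∧ (∀ u v : X, |m u - m v| ≤ L * ‖u - v‖) ∧
      ∀ u, m u ≤ g u)
    (κ : ℝ) (hκ : 0 < κ)
    (hg : ∀ l ∈ Icc (0:ℝ) 1, ∀ x h : X,
      l * g (x + (1 - l) • h) + (1 - l) * g (x - l • h) - g x ≤ l * (1 - l) * κ * φ ‖h‖)
    (FL : X → ℝ)
    (hFL : ∀ x, FL x = sSup {r : ℝ | ∃ h : X → ℝ, ConvexOn ℝ univ h ∧
      (∀ u v : X, |h u - h v| ≤ L * ‖u - v‖) ∧ (∀ u, h u ≤ g u) ∧ r = h x}) :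
    ∀ l ∈ Icc (0:ℝ) 1, ∀ x h : X,
      l * FL (x + (1 - l) • h) + (1 - l) * FL (x - l • h) - FL x
        ≤ l * (1 - l) * κ * φ ‖h‖ := by
  obtain ⟨m, hmconv, hmlip, hmle⟩ := hmin
  set S : X → Set ℝ := fun y => {r : ℝ | ∃ h : X → ℝ, ConvexOn ℝ univ h ∧
      (∀ u v : X, |h u - h v| ≤ L * ‖u - v‖) ∧ (∀ u, h u ≤ g u) ∧ r = h y} with hSdef
  have hFL' : ∀ y, FL y = sSup (S y) := hFL
  have hne : ∀ y, (S y).Nonempty := fun y => ⟨m y, m, hmconv, hmlip, hmle, rfl⟩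
  have hbdd : ∀ y, BddAbove (S y) := fun y => ⟨g y, fun r hr => by
    obtain ⟨h', _, _, hle, rfl⟩ := hr; exact hle y⟩
  have hupper : ∀ (h' : X → ℝ), ConvexOn ℝ univ h' →
      (∀ u v, |h' u - h' v| ≤ L * ‖u - v‖) →
      (∀ u, h' u ≤ g u) → ∀ y, h' y ≤ FL y := fun h' h1 h2 h3 y => by
    rw [hFL']; exact le_csSup (hbdd y) ⟨h', h1, h2, h3, rfl⟩
  have hFLle : ∀ y, FL y ≤ g y := fun y => by
    rw [hFL']
    exact csSup_le (hne y) (fun r hr => by obtain ⟨h', _, _, hle, rfl⟩ := hr; exact hle y)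
  have hFLlip : ∀ u v, FL u - FL v ≤ L * ‖u - v‖ := by
    intro u v
    rw [hFL' u, sub_le_iff_le_add]
    refine csSup_le (hne u) fun r hr => ?_
    obtain ⟨h', hcv, hlip, hle, rfl⟩ := hr
    have h1 := (abs_le.1 (hlip u v)).2
    have h2 : h' v ≤ FL v := hupper h' hcv hlip hle v
    linarith
  have hFLlip' : ∀ u v, |FL u - FL v| ≤ L * ‖u - v‖ := fun u v => by
    rw [abs_sub_le_iff]
    refine ⟨hFLlip u v, ?_⟩
    rw [norm_sub_rev]
    exact hFLlip v u
  have hFLconv : ConvexOn ℝ univ FL := by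
    refine ⟨convex_univ, fun u _ v _ a b ha hb hab => ?_⟩
    simp only [smul_eq_mul]
    rw [hFL' (a • u + b • v)]
    refine csSup_le (hne _) fun r hr => ?_
    obtain ⟨h', hcv, hlip, hle, rfl⟩ := hr
    have h1 : h' (a • u + b • v) ≤ a * h' u + b * h' v := by
      simpa using hcv.2 (mem_univ u) (mem_univ v) ha hb hab
    have h2 : h' u ≤ FL u := hupper h' hcv hlip hle u
    have h3 : h' v ≤ FL v := hupper h' hcv hlip hle v
    nlinarith [mul_le_mul_of_nonneg_left h2 ha, mul_le_mul_of_nonneg_left h3 hb]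
  intro l hl x h
  obtain ⟨hl0, hl1⟩ := hl
  have hl1' : (0:ℝ) ≤ 1 - l := by linarith
  set c : ℝ := l * (1 - l) * κ * φ ‖h‖ with hc
  set G : X → ℝ := fun u => l * FL (u + (1 - l) • h) + (1 - l) * FL (u - l • h) - c with hGdef
  have hGconv : ConvexOn ℝ univ G := by
    refine ⟨convex_univ, fun u _ v _ a b ha hb hab => ?_⟩
    simp only [smul_eq_mul, hGdef]
    have e1 : a • u + b • v + (1 - l) • h = a • (u + (1 - l) • h) + b • (v + (1 - l) • h) := by
      rw [smul_add, smul_add, add_add_add_comm, ← add_smul, hab, one_smul]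
    have e2 : a • u + b • v - l • h = a • (u - l • h) + b • (v - l • h) := by
      rw [smul_sub, smul_sub, sub_add_sub_comm, ← add_smul, hab, one_smul]
    have h1 : FL (a • u + b • v + (1 - l) • h)
        ≤ a * FL (u + (1 - l) • h) + b * FL (v + (1 - l) • h) := by
      rw [e1]; simpa only [smul_eq_mul] using hFLconv.2 (mem_univ _) (mem_univ _) ha hb hab
    have h2 : FL (a • u + b • v - l • h)
        ≤ a * FL (u - l • h) + b * FL (v - l • h) := by
      rw [e2]; simpa only [smul_eq_mul] using hFLconv.2 (mem_univ _) (mem_univ _) ha hb hab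
    have hcc : (a + b) * c = c := by rw [hab, one_mul]
    nlinarith [mul_le_mul_of_nonneg_left h1 hl0, mul_le_mul_of_nonneg_left h2 hl1']
  have hGlip : ∀ u v, |G u - G v| ≤ L * ‖u - v‖ := by
    intro u v
    have e1 : (u + (1 - l) • h) - (v + (1 - l) • h) = u - v := by abel
    have e2 : (u - l • h) - (v - l • h) = u - v := by abel
    have a1 := hFLlip' (u + (1 - l) • h) (v + (1 - l) • h)
    have a2 := hFLlip' (u - l • h) (v - l • h)
    rw [e1] at a1; rw [e2] at a2
    have e3 : G u - G v = l * (FL (u + (1 - l) • h) - FL (v + (1 - l) • h))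
        + (1 - l) * (FL (u - l • h) - FL (v - l • h)) := by simp only [hGdef]; ring
    rw [e3]
    calc |l * (FL (u + (1 - l) • h) - FL (v + (1 - l) • h))
        + (1 - l) * (FL (u - l • h) - FL (v - l • h))|
        ≤ l * |FL (u + (1 - l) • h) - FL (v + (1 - l) • h)|
          + (1 - l) * |FL (u - l • h) - FL (v - l • h)| := by
          refine (abs_add_le _ _).trans ?_
          rw [abs_mul, abs_mul, abs_of_nonneg hl0, abs_of_nonneg hl1']
      _ ≤ L * ‖u - v‖ := by
          nlinarith [mul_le_mul_of_nonneg_left a1 hl0, mul_le_mul_of_nonneg_left a2 hl1']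
  have hGle : ∀ u, G u ≤ g u := by
    intro u
    have h1 := hg l ⟨hl0, hl1⟩ u h
    have h2 : FL (u + (1 - l) • h) ≤ g (u + (1 - l) • h) := hFLle _
    have h3 : FL (u - l • h) ≤ g (u - l • h) := hFLle _
    simp only [hGdef]
    nlinarith [mul_le_mul_of_nonneg_left h2 hl0, mul_le_mul_of_nonneg_left h3 hl1']
  have hfinal : G x ≤ FL x := hupper G hGconv hGlip hGle x
  simp only [hGdef] at hfinal
  linarith
end

section
/- Let X be a real Hilbert space, 0 < α ≤ 1, and ψ_α(x) = |x|^{1+α}/(1+α). Then for all z, h ∈ X and λ ∈ [0,1]: λψ_α(z+(1−λ)h) + (1−λ)ψ_α(z−λh) − ψ_α(z) ≤ 2^{1−α}·λ(1−λ)·|h|^{1+α}/(1+α). -/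
/-!
Write `A = ‖z + (1 - l) • h‖`, `B = ‖z - l • h‖`, `N = ‖z‖`, `D = ‖h‖` and `p = 1 + α`.
The parallelogram law gives `l A² + (1 - l) B² = N² + l (1 - l) D²`, and `D ≤ A + B`;
by homogeneity we may take `A + B = 1`. Then `N²` is the convex combination with weight `D²`
of `Q = l A² + (1 - l) B²` and `R = (l A - (1 - l) B)²`, so concavity of `t ↦ t ^ (p / 2)`
bounds `N ^ p` from below by `Q ^ (p / 2)` and `R ^ (p / 2)`. The first dominates
`l A ^ p + (1 - l) B ^ p` by concavity again; the second does so up to `2 ^ (1 - α) l (1 - l)`,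
a one-variable inequality proved by locating the maximum: at the endpoints and at an interior
critical point it reduces to `x ^ α + y ^ α ≤ 2 ^ (1 - α) (x + y) ^ α`.
-/

open Set Real

lemma arith_mean2_rpow_le_rpow_arith_mean {s w v a b : ℝ} (hs₀ : 0 ≤ s) (hs₁ : s ≤ 1)
    (hw : 0 ≤ w) (hv : 0 ≤ v) (hwv : w + v = 1) (ha : 0 ≤ a) (hb : 0 ≤ b) :
    w * a ^ s + v * b ^ s ≤ (w * a + v * b) ^ s :=
  (concaveOn_rpow hs₀ hs₁).2 ha hb hw hv hwv

lemma rpow_add_rpow_le_mul_rpow_add {α x y : ℝ} (hα₀ : 0 ≤ α) (hα₁ : α ≤ 1)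
    (hx : 0 ≤ x) (hy : 0 ≤ y) :
    x ^ α + y ^ α ≤ 2 ^ (1 - α) * (x + y) ^ α := by
  have hmean := arith_mean2_rpow_le_rpow_arith_mean hα₀ hα₁ (by norm_num) (by norm_num)
    (add_halves 1) hx hy
  have h2α : (0 : ℝ) < 2 ^ α := by positivity
  rw [← mul_add, ← mul_add, one_div_mul_eq_div, one_div_mul_eq_div,
    div_rpow (by positivity) zero_le_two, div_le_div_iff₀ two_pos h2α] at hmean
  rw [rpow_sub zero_lt_two, rpow_one, div_mul_eq_mul_div, le_div_iff₀ h2α]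
  linarith

lemma mul_rpow_add_mul_one_sub_rpow_sub_rpow_le {α l m u : ℝ} (hα₀ : 0 < α) (hα₁ : α ≤ 1)
    (hl : 0 ≤ l) (hm : 0 ≤ m) (hlm : l + m = 1) (hu : u ∈ Icc m 1) :
    l * u ^ (1 + α) + m * (1 - u) ^ (1 + α) - (u - m) ^ (1 + α) ≤ 2 ^ (1 - α) * (l * m) := by
  set φ : ℝ → ℝ := fun x ↦ l * x ^ (1 + α) + m * (1 - x) ^ (1 + α) - (x - m) ^ (1 + α)
  have hp : 1 + α ≠ 0 := by positivity
  have hK : 1 ≤ (2 : ℝ) ^ (1 - α) := one_le_rpow one_le_two (by linarith)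
  have hφ : ContinuousOn φ (Icc m 1) := by fun_prop (disch := positivity)
  obtain ⟨u₀, hu₀, hmax⟩ := isCompact_Icc.exists_isMaxOn (nonempty_Icc.2 (hu.1.trans hu.2)) hφ
  suffices φ u₀ ≤ 2 ^ (1 - α) * (l * m) from (hmax hu).trans this
  have hl' : 1 - m = l := by linarith
  rcases hu₀.1.eq_or_lt with rfl | hmu
  · have h2 := rpow_add_rpow_le_mul_rpow_add hα₀.le hα₁ hl hm
    rw [hlm, one_rpow, mul_one] at h2
    simp only [φ, sub_self, zero_rpow hp, hl', rpow_one_add' hm hp, rpow_one_add' hl hp]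
    nlinarith [mul_nonneg hl hm]
  rcases hu₀.2.eq_or_lt with rfl | hu1
  · have hlα : l ≤ l ^ α := self_le_rpow_of_le_one hl (by linarith) hα₁
    simp only [φ, one_rpow, sub_self, zero_rpow hp, hl', rpow_one_add' hl hp]
    nlinarith [mul_nonneg hl hm]
  -- at an interior maximum `φ' = 0`, which turns `φ u₀` into `l m ((1 - u₀) ^ α + u₀ ^ α)`
  have hderiv : HasDerivAt φ
      ((1 + α) * (l * u₀ ^ α - m * (1 - u₀) ^ α - (u₀ - m) ^ α)) u₀ := by
    have hp1 : 1 ≤ 1 + α := by linarith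
    refine ((((hasDerivAt_id' u₀).rpow_const (Or.inr hp1)).const_mul l).add
      ((((hasDerivAt_id' u₀).const_sub 1).rpow_const (Or.inr hp1)).const_mul m) |>.sub
      (((hasDerivAt_id' u₀).sub_const m).rpow_const (Or.inr hp1))).congr_deriv ?_
    rw [add_sub_cancel_left]
    ring
  have hcrit : l * u₀ ^ α = m * (1 - u₀) ^ α + (u₀ - m) ^ α := by
    have := (hmax.isLocalMax (Icc_mem_nhds hmu hu1)).hasDerivAt_eq_zero hderiv
    have := (mul_eq_zero.1 this).resolve_left hp
    linarith
  have h2 := rpow_add_rpow_le_mul_rpow_add hα₀.le hα₁ (sub_nonneg.2 hu₀.2) (hm.trans hu₀.1)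
  rw [sub_add_cancel, one_rpow, mul_one] at h2
  have hval : φ u₀ = l * m * ((1 - u₀) ^ α + u₀ ^ α) := by
    simp only [φ, rpow_one_add' (by linarith : 0 ≤ u₀) hp,
      rpow_one_add' (sub_nonneg.2 hu₀.2) hp, rpow_one_add' (sub_nonneg.2 hu₀.1) hp]
    linear_combination (u₀ - m) * hcrit - m * (1 - u₀) ^ α * hlm
  rw [hval]
  nlinarith [mul_nonneg hl hm]

lemma mul_rpow_add_mul_rpow_le_abs_rpow_add {α l m A B : ℝ} (hα₀ : 0 < α) (hα₁ : α ≤ 1)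
    (hl : 0 ≤ l) (hm : 0 ≤ m) (hlm : l + m = 1) (hA : 0 ≤ A) (hB : 0 ≤ B) (hAB : A + B = 1) :
    l * A ^ (1 + α) + m * B ^ (1 + α) ≤ |l * A - m * B| ^ (1 + α) + 2 ^ (1 - α) * (l * m) := by
  obtain rfl : B = 1 - A := by linarith
  have hdiff : l * A - m * (1 - A) = A - m := by linear_combination A * hlm
  rw [hdiff]
  rcases le_total m A with hmA | hAm
  · have := mul_rpow_add_mul_one_sub_rpow_sub_rpow_le hα₀ hα₁ hl hm hlm ⟨hmA, by linarith⟩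
    rw [abs_of_nonneg (sub_nonneg.2 hmA)]
    linarith
  · have := mul_rpow_add_mul_one_sub_rpow_sub_rpow_le hα₀ hα₁ hm hl (by linarith)
      (u := 1 - A) ⟨by linarith, by linarith⟩
    rw [sub_sub_cancel, show 1 - A - l = m - A by linarith, mul_comm m l] at this
    rw [abs_of_nonpos (sub_nonpos.2 hAm), neg_sub]
    linarith

lemma mul_rpow_add_mul_rpow_sub_rpow_le_of_add_eq_one {α l m A B N D : ℝ} (hα₀ : 0 < α)
    (hα₁ : α ≤ 1) (hl : 0 ≤ l) (hm : 0 ≤ m) (hlm : l + m = 1) (hA : 0 ≤ A) (hB : 0 ≤ B)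
    (hAB : A + B = 1) (hN : 0 ≤ N) (hD : 0 ≤ D) (hD₁ : D ≤ 1)
    (hid : l * A ^ 2 + m * B ^ 2 = N ^ 2 + l * m * D ^ 2) :
    l * A ^ (1 + α) + m * B ^ (1 + α) - N ^ (1 + α) ≤ 2 ^ (1 - α) * (l * m) * D ^ (1 + α) := by
  have hs₀ : 0 ≤ (1 + α) / 2 := by positivity
  have hs₁ : (1 + α) / 2 ≤ 1 := by linarith
  have hsq : ∀ x : ℝ, 0 ≤ x → (x ^ 2) ^ ((1 + α) / 2) = x ^ (1 + α) := fun x hx ↦ by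
    rw [← rpow_natCast_mul hx]
    ring_nf
  set Q := l * A ^ 2 + m * B ^ 2
  have hQR : Q - (l * A - m * B) ^ 2 = l * m := by
    linear_combination (-Q) * hlm + l * m * (A + B + 1) * hAB
  have hNQR : N ^ 2 = (1 - D ^ 2) * Q + D ^ 2 * (l * A - m * B) ^ 2 := by
    linear_combination -hid + D ^ 2 * hQR
  have hjensen_Q : l * A ^ (1 + α) + m * B ^ (1 + α) ≤ Q ^ ((1 + α) / 2) := by
    have := arith_mean2_rpow_le_rpow_arith_mean hs₀ hs₁ hl hm hlm (sq_nonneg A) (sq_nonneg B)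
    rwa [hsq A hA, hsq B hB] at this
  have hjensen_N : (1 - D ^ 2) * Q ^ ((1 + α) / 2)
      + D ^ 2 * |l * A - m * B| ^ (1 + α) ≤ N ^ (1 + α) := by
    have := arith_mean2_rpow_le_rpow_arith_mean hs₀ hs₁ (by nlinarith) (sq_nonneg D)
      (sub_add_cancel 1 _) (a := Q) (by positivity) (sq_nonneg (l * A - m * B))
    rwa [← hNQR, hsq N hN, ← sq_abs (l * A - m * B), hsq _ (abs_nonneg _)] at this
  have hstar := mul_rpow_add_mul_rpow_le_abs_rpow_add hα₀ hα₁ hl hm hlm hA hB hAB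
  have hDp : D ^ 2 ≤ D ^ (1 + α) := by
    simpa using rpow_le_rpow_of_exponent_ge' hD hD₁ (by positivity) (by linarith : 1 + α ≤ 2)
  have hK : 0 ≤ 2 ^ (1 - α) * (l * m) := by positivity
  have hD2 : D ^ 2 ≤ 1 := pow_le_one₀ hD hD₁
  nlinarith [mul_le_mul_of_nonneg_left hDp hK,
    mul_nonpos_of_nonneg_of_nonpos (sub_nonneg.2 hD2) (sub_nonpos.2 hjensen_Q),
    mul_le_mul_of_nonneg_left (sub_le_iff_le_add.2 hstar) (sq_nonneg D)]

lemma mul_rpow_add_mul_rpow_sub_rpow_le {α l m A B N D : ℝ} (hα₀ : 0 < α) (hα₁ : α ≤ 1)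
    (hl : 0 ≤ l) (hm : 0 ≤ m) (hlm : l + m = 1) (hA : 0 ≤ A) (hB : 0 ≤ B) (hN : 0 ≤ N)
    (hD : 0 ≤ D) (hDAB : D ≤ A + B) (hid : l * A ^ 2 + m * B ^ 2 = N ^ 2 + l * m * D ^ 2) :
    l * A ^ (1 + α) + m * B ^ (1 + α) - N ^ (1 + α) ≤ 2 ^ (1 - α) * (l * m) * D ^ (1 + α) := by
  have hp : 1 + α ≠ 0 := by positivity
  rcases (add_nonneg hA hB).eq_or_lt with hc | hc
  · obtain ⟨rfl, rfl, rfl⟩ : A = 0 ∧ B = 0 ∧ D = 0 := ⟨by linarith, by linarith, by linarith⟩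
    obtain rfl : N = 0 := by nlinarith
    simp [zero_rpow hp]
  -- both sides are homogeneous of degree `1 + α` in `(A, B, N, D)`
  set c := A + B
  have hnorm := mul_rpow_add_mul_rpow_sub_rpow_le_of_add_eq_one hα₀ hα₁ hl hm hlm
    (div_nonneg hA hc.le) (div_nonneg hB hc.le) (by rw [← add_div, div_self hc.ne'])
    (div_nonneg hN hc.le) (div_nonneg hD hc.le) ((div_le_one hc).2 hDAB)
    (by field_simp; linear_combination hid)
  simp only [div_rpow hA hc.le, div_rpow hB hc.le, div_rpow hN hc.le, div_rpow hD hc.le] at hnorm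
  have hcp : 0 < c ^ (1 + α) := by positivity
  calc l * A ^ (1 + α) + m * B ^ (1 + α) - N ^ (1 + α)
      = c ^ (1 + α) * (l * (A ^ (1 + α) / c ^ (1 + α)) + m * (B ^ (1 + α) / c ^ (1 + α))
          - N ^ (1 + α) / c ^ (1 + α)) := by field_simp
    _ ≤ c ^ (1 + α) * (2 ^ (1 - α) * (l * m) * (D ^ (1 + α) / c ^ (1 + α))) := by gcongr
    _ = 2 ^ (1 - α) * (l * m) * D ^ (1 + α) := by field_simp

lemma mul_norm_add_smul_sq_add_mul_norm_sub_smul_sq {X : Type*} [NormedAddCommGroup X]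
    [InnerProductSpace ℝ X] {l m : ℝ} (hlm : l + m = 1) (z h : X) :
    l * ‖z + m • h‖ ^ 2 + m * ‖z - l • h‖ ^ 2 = ‖z‖ ^ 2 + l * m * ‖h‖ ^ 2 := by
  rw [norm_add_sq_real, norm_sub_sq_real, real_inner_smul_right, real_inner_smul_right,
    norm_smul, norm_smul, mul_pow, mul_pow, Real.norm_eq_abs, Real.norm_eq_abs, sq_abs, sq_abs]
  linear_combination (‖z‖ ^ 2 + l * m * ‖h‖ ^ 2) * hlm

theorem stmt_15 {X : Type*} [NormedAddCommGroup X] [InnerProductSpace ℝ X]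
    (α : ℝ) (hα : 0 < α) (hα1 : α ≤ 1) :
    ∀ (z h : X), ∀ l ∈ Icc (0:ℝ) 1,
      l * (‖z + (1 - l) • h‖ ^ (1 + α) / (1 + α))
        + (1 - l) * (‖z - l • h‖ ^ (1 + α) / (1 + α))
        - ‖z‖ ^ (1 + α) / (1 + α)
      ≤ 2 ^ (1 - α) * (l * (1 - l)) * (‖h‖ ^ (1 + α) / (1 + α)) := by
  intro z h l ⟨hl₀, hl₁⟩
  have hlm : l + (1 - l) = 1 := add_sub_cancel l 1
  have htri : ‖h‖ ≤ ‖z + (1 - l) • h‖ + ‖z - l • h‖ := by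
    have hdiff : (z + (1 - l) • h) - (z - l • h) = h := by
      rw [add_sub_sub_cancel, ← add_smul, sub_add_cancel, one_smul]
    simpa [hdiff] using norm_sub_le (z + (1 - l) • h) (z - l • h)
  have key := mul_rpow_add_mul_rpow_sub_rpow_le hα hα1 hl₀ (sub_nonneg.2 hl₁) hlm
    (norm_nonneg _) (norm_nonneg _) (norm_nonneg z) (norm_nonneg h) htri
    (mul_norm_add_smul_sq_add_mul_norm_sub_smul_sq hlm z h)
  simp only [mul_div_assoc', ← add_div, ← sub_div]
  gcongr
end

section
/- Let X be a real Hilbert space and ω an increasing modulus of continuity with lim_{t→∞}ω(t)=∞. Define ψ_ω(x) = φ_ω(|x|) where φ_ω(t) = ∫₀ᵗ ω(s) ds. Then for all z, h ∈ X and λ ∈ [0,1]: λψ_ω(z+(1−λ)h) + (1−λ)ψ_ω(z−λh) − ψ_ω(z) ≤ 2·λ(1−λ)·φ_ω(|h|). -/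
/-!
The gradient of `x ↦ φ ‖x‖` is `R x = (ω ‖x‖ / ‖x‖) • x`, and it satisfies the one-sided bound
`⟪R x - R y, x - y⟫ ≤ 2 ‖x - y‖ ω ‖x - y‖`. With `‖y‖ ≤ ‖x‖`, this reduces to a scalar
inequality that uses only that `ω` is nondecreasing and that `ω t / t` is nonincreasing (concavity
with `ω 0 = 0`). Along the line `g s = φ ‖z + s • h‖`, the left-hand side of the theorem equals
`λ (1 - λ) ∫₀¹ (g' ((1 - λ) u) - g' (-λ u)) du`, and the bound gives
`g' a - g' b ≤ 2 ‖h‖ ω (‖h‖ (a - b))`, whose integral over `[0, 1]` is `2 φ ‖h‖`.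
-/

open Set Filter Topology MeasureTheory
open scoped InnerProductSpace

section Modulus

variable {ω : ℝ → ℝ}

theorem ConcaveOn.antitoneOn_div (hconc : ConcaveOn ℝ (Ici 0) ω) (h0 : ω 0 = 0) :
    AntitoneOn (fun t => ω t / t) (Ioi 0) := by
  intro s hs t ht hst
  simpa [slope_def_field, h0] using
    hconc.antitoneOn_slope_gt self_mem_Ici ⟨mem_Ici.2 (le_of_lt hs), hs⟩
      ⟨mem_Ici.2 (le_of_lt ht), ht⟩ hst

theorem MonotoneOn.nonneg_of_map_zero (hmono : MonotoneOn ω (Ici 0)) (h0 : ω 0 = 0) {t : ℝ}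
    (ht : 0 ≤ t) : 0 ≤ ω t :=
  h0 ▸ hmono self_mem_Ici ht ht

theorem abs_integral_le_mul_of_monotoneOn (hmono : MonotoneOn ω (Ici 0)) (h0 : ω 0 = 0)
    {r : ℝ} (hr : 0 ≤ r) : |∫ s in (0:ℝ)..r, ω s| ≤ r * ω r := by
  have hint : IntervalIntegrable ω volume 0 r :=
    (hmono.mono (by simp [uIcc_of_le hr, Icc_subset_Ici_self])).intervalIntegrable
  rw [abs_of_nonneg (intervalIntegral.integral_nonneg hr fun s hs =>
    hmono.nonneg_of_map_zero h0 hs.1)]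
  simpa using intervalIntegral.integral_mono_on hr hint intervalIntegrable_const
    fun s hs => hmono hs.1 (le_trans hs.1 hs.2) hs.2

theorem div_mul_le_of_le_mul_of_le_sq (hmono : MonotoneOn ω (Ici 0)) (h0 : ω 0 = 0)
    (hslope : AntitoneOn (fun t => ω t / t) (Ioi 0)) {p T a : ℝ} (hp : 0 ≤ p) (hT : 0 < T)
    (ha : 0 ≤ a) (hap : a ≤ p * T) (haT : a ≤ T ^ 2) : ω p / p * a ≤ T * ω T := by
  have hωT : 0 ≤ ω T := hmono.nonneg_of_map_zero h0 hT.le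
  rcases hp.eq_or_lt with rfl | hp
  · simpa using mul_nonneg hT.le hωT
  rcases le_total p T with hpT | hTp
  · calc ω p / p * a ≤ ω p / p * (p * T) :=
          mul_le_mul_of_nonneg_left hap (div_nonneg (hmono.nonneg_of_map_zero h0 hp.le) hp.le)
      _ = ω p * T := by field_simp
      _ ≤ ω T * T := mul_le_mul_of_nonneg_right (hmono hp.le hT.le hpT) hT.le
      _ = T * ω T := mul_comm _ _
  · calc ω p / p * a ≤ ω T / T * a := mul_le_mul_of_nonneg_right (hslope hT hp hTp) ha
      _ ≤ ω T / T * T ^ 2 := mul_le_mul_of_nonneg_left haT (div_nonneg hωT hT.le)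
      _ = T * ω T := by field_simp

theorem div_mul_add_div_mul_le (hmono : MonotoneOn ω (Ici 0)) (h0 : ω 0 = 0)
    (hslope : AntitoneOn (fun t => ω t / t) (Ioi 0)) {p q T a b : ℝ} (hqp : q ≤ p) (hT : 0 < T)
    (ha : 0 ≤ a) (hap : a ≤ p * T) (hbq : |b| ≤ q * T) (hab : a + b = T ^ 2) :
    ω p / p * a + ω q / q * b ≤ 2 * (T * ω T) := by
  rcases le_or_gt 0 b with hb | hb
  · have hq : 0 ≤ q := nonneg_of_mul_nonneg_left ((abs_nonneg b).trans hbq) hT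
    have hpa := div_mul_le_of_le_mul_of_le_sq hmono h0 hslope (hq.trans hqp) hT ha hap
      (by linarith)
    have hqb := div_mul_le_of_le_mul_of_le_sq hmono h0 hslope hq hT hb
      ((le_abs_self b).trans hbq) (by linarith)
    linarith
  · have hq : 0 < q :=
      pos_of_mul_pos_left ((neg_pos.2 hb).trans_le ((neg_le_abs b).trans hbq)) hT.le
    have hp : 0 < p := hq.trans_le hqp
    have hTp : T ≤ p := le_of_mul_le_mul_right (by nlinarith) hT
    have hωT : 0 ≤ ω T := hmono.nonneg_of_map_zero h0 hT.le
    calc ω p / p * a + ω q / q * b ≤ ω p / p * a + ω p / p * b :=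
          add_le_add_right (mul_le_mul_of_nonpos_right (hslope hq hp hqp) hb.le) _
      _ = ω p / p * T ^ 2 := by rw [← mul_add, hab]
      _ ≤ ω T / T * T ^ 2 := mul_le_mul_of_nonneg_right (hslope hT hp hTp) (sq_nonneg T)
      _ = T * ω T := by field_simp
      _ ≤ 2 * (T * ω T) := by linarith [mul_nonneg hT.le hωT]

end Modulus

section RadialField

variable {X : Type*} [NormedAddCommGroup X] [InnerProductSpace ℝ X] {ω : ℝ → ℝ}

/-- The gradient of `x ↦ ∫ s in 0..‖x‖, ω s`; at `x = 0` the junk value `ω 0 / 0 = 0` gives the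
correct gradient `0`. -/
noncomputable def radialField (ω : ℝ → ℝ) (x : X) : X := (ω ‖x‖ / ‖x‖) • x

theorem inner_radialField_sub_le (hmono : MonotoneOn ω (Ici 0)) (h0 : ω 0 = 0)
    (hslope : AntitoneOn (fun t => ω t / t) (Ioi 0)) (x y : X) :
    ⟪radialField ω x - radialField ω y, x - y⟫_ℝ ≤ 2 * (‖x - y‖ * ω ‖x - y‖) := by
  wlog hyx : ‖y‖ ≤ ‖x‖ generalizing x y
  · simpa only [← neg_sub x y, ← neg_sub (radialField ω x), inner_neg_neg, norm_neg]
      using this y x (le_of_not_ge hyx)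
  rcases eq_or_ne x y with rfl | hxy
  · simp
  have hsplit : ⟪radialField ω x - radialField ω y, x - y⟫_ℝ
      = ω ‖x‖ / ‖x‖ * ⟪x, x - y⟫_ℝ + ω ‖y‖ / ‖y‖ * ⟪y, y - x⟫_ℝ := by
    rw [radialField, radialField, inner_sub_left, real_inner_smul_left, real_inner_smul_left,
      ← neg_sub x y, inner_neg_right]
    ring
  rw [hsplit]
  refine div_mul_add_div_mul_le hmono h0 hslope hyx (norm_pos_iff.2 (sub_ne_zero.2 hxy)) ?_
    (real_inner_le_norm x (x - y)) ?_ ?_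
  · rw [inner_sub_right, real_inner_self_eq_norm_sq]
    nlinarith [real_inner_le_norm x y, norm_nonneg x]
  · rw [norm_sub_rev]
    exact abs_real_inner_le_norm y (y - x)
  · rw [← neg_sub x y, inner_neg_right, ← sub_eq_add_neg, ← inner_sub_left,
      real_inner_self_eq_norm_sq]

theorem inner_radialField_add_smul_sub_le (hmono : MonotoneOn ω (Ici 0)) (h0 : ω 0 = 0)
    (hslope : AntitoneOn (fun t => ω t / t) (Ioi 0)) (z h : X) {a b : ℝ} (hba : b < a) :
    ⟪radialField ω (z + a • h), h⟫_ℝ - ⟪radialField ω (z + b • h), h⟫_ℝ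
      ≤ 2 * ‖h‖ * ω (‖h‖ * (a - b)) := by
  have hab : 0 < a - b := sub_pos.2 hba
  have key := inner_radialField_sub_le hmono h0 hslope (z + a • h) (z + b • h)
  rw [add_sub_add_left_eq_sub, ← sub_smul, real_inner_smul_right, norm_smul,
    Real.norm_of_nonneg hab.le, inner_sub_left] at key
  refine le_of_mul_le_mul_left ?_ hab
  rw [mul_comm (a - b) ‖h‖] at key
  linarith

theorem norm_radialField_le (x : X) : ‖radialField ω x‖ ≤ |ω ‖x‖| := by
  rcases eq_or_ne x 0 with rfl | hx
  · simp [radialField]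
  · rw [radialField, norm_smul, Real.norm_eq_abs, abs_div, abs_norm,
      div_mul_cancel₀ _ (norm_ne_zero_iff.2 hx)]

theorem continuous_radialField (hcont : ContinuousOn ω (Ici 0)) (h0 : ω 0 = 0) :
    Continuous (radialField ω : X → X) := by
  have hωn : Continuous fun x : X => ω ‖x‖ :=
    hcont.comp_continuous continuous_norm fun x => norm_nonneg x
  refine continuous_iff_continuousAt.2 fun x => ?_
  rcases eq_or_ne x 0 with rfl | hx
  · rw [ContinuousAt, show radialField ω (0 : X) = 0 by simp [radialField]]
    refine squeeze_zero_norm norm_radialField_le ?_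
    simpa [h0] using hωn.abs.tendsto 0
  · exact (hωn.continuousAt.div continuous_norm.continuousAt (norm_ne_zero_iff.2 hx)).smul
      continuousAt_id

theorem hasFDerivAt_norm {x : X} (hx : x ≠ 0) :
    HasFDerivAt (fun y : X => ‖y‖) (‖x‖⁻¹ • innerSL ℝ x) x := by
  have := (hasStrictFDerivAt_norm_sq x).hasFDerivAt.sqrt (by positivity)
  simp only [Real.sqrt_sq (norm_nonneg _)] at this
  convert this using 1
  ext y
  simp only [smul_apply, coe_innerSL_apply, smul_eq_mul, one_div, mul_inv_rev,
    nsmul_eq_mul, Nat.cast_ofNat]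
  field_simp

theorem hasFDerivAt_integral_norm (hmono : MonotoneOn ω (Ici 0)) (hcont : ContinuousOn ω (Ici 0))
    (h0 : ω 0 = 0) (x : X) :
    HasFDerivAt (fun y : X => ∫ s in (0:ℝ)..‖y‖, ω s) (innerSL ℝ (radialField ω x)) x := by
  rcases eq_or_ne x 0 with rfl | hx
  · have hsmall : (fun y : X => ‖y‖ * ω ‖y‖) =o[𝓝 0] fun y => y := by
      have hω : Tendsto (fun y : X => ω ‖y‖) (𝓝 0) (𝓝 0) := by
        simpa [h0, Function.comp_def] using
          (hcont.comp_continuous continuous_norm fun y => norm_nonneg y).tendsto (0 : X)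
      have := (Asymptotics.isBigO_refl (fun y : X => ‖y‖) _).mul_isLittleO
        ((Asymptotics.isLittleO_one_iff ℝ).2 hω)
      simp only [mul_one] at this
      exact Asymptotics.isLittleO_norm_right.1 this
    rw [hasFDerivAt_iff_isLittleO_nhds_zero]
    simpa [radialField] using (Asymptotics.IsBigO.of_bound 1 (Eventually.of_forall fun y => by
      simpa [abs_of_nonneg (hmono.nonneg_of_map_zero h0 (norm_nonneg y))] using
        abs_integral_le_mul_of_monotoneOn hmono h0 (norm_nonneg y))).trans_isLittleO hsmall
  · have hr : 0 < ‖x‖ := norm_pos_iff.2 hx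
    have hφ : HasDerivAt (fun r => ∫ s in (0:ℝ)..r, ω s) (ω ‖x‖) ‖x‖ :=
      intervalIntegral.integral_hasDerivAt_right
        ((hcont.mono (by simp [Icc_subset_Ici_self])).intervalIntegrable)
        ((hcont.mono Ioi_subset_Ici_self).stronglyMeasurableAtFilter isOpen_Ioi _ hr)
        (hcont.continuousAt (Ici_mem_nhds hr))
    refine (hφ.comp_hasFDerivAt x (hasFDerivAt_norm hx)).congr_fderiv ?_
    ext y
    simp only [smul_apply, coe_innerSL_apply, smul_eq_mul, radialField,
      map_smul]
    ring

theorem sub_eq_mul_integral_comp_mul {g g' : ℝ → ℝ} (hg : ∀ s, HasDerivAt g (g' s) s)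
    (hg' : Continuous g') (t : ℝ) : g t - g 0 = t * ∫ u in (0:ℝ)..1, g' (t * u) := by
  have := intervalIntegral.smul_integral_comp_mul_left (a := 0) (b := 1) g' t
  simp only [mul_zero, mul_one, smul_eq_mul] at this
  rw [this, intervalIntegral.integral_eq_sub_of_hasDerivAt (fun s _ => hg s)
    (hg'.intervalIntegrable 0 t)]

theorem convex_comb_sub_le_integral {g g' W : ℝ → ℝ} (hg : ∀ s, HasDerivAt g (g' s) s)
    (hg' : Continuous g') (hW : IntervalIntegrable W volume 0 1)
    (hbound : ∀ a b, b < a → g' a - g' b ≤ W (a - b)) {l : ℝ} (hl : l ∈ Icc (0:ℝ) 1) :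
    l * g (1 - l) + (1 - l) * g (-l) - g 0 ≤ l * (1 - l) * ∫ u in (0:ℝ)..1, W u := by
  have hint : ∀ c, IntervalIntegrable (fun u => g' (c * u)) volume 0 1 := fun c =>
    (hg'.comp (continuous_const_mul c)).intervalIntegrable 0 1
  have hsplit : l * g (1 - l) + (1 - l) * g (-l) - g 0
      = l * (1 - l) * ∫ u in (0:ℝ)..1, (g' ((1 - l) * u) - g' (-l * u)) := by
    rw [intervalIntegral.integral_sub (hint _) (hint _)]
    linear_combination l * sub_eq_mul_integral_comp_mul hg hg' (1 - l)
      + (1 - l) * sub_eq_mul_integral_comp_mul hg hg' (-l)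
  rw [hsplit]
  refine mul_le_mul_of_nonneg_left (intervalIntegral.integral_mono_on_of_le_Ioo zero_le_one
    ((hint _).sub (hint _)) hW fun u hu => ?_) (mul_nonneg hl.1 (sub_nonneg.2 hl.2))
  have := hbound ((1 - l) * u) (-l * u) (by linarith [hu.1])
  rwa [show (1 - l) * u - -l * u = u by ring] at this

end RadialField

theorem stmt_16_general {X : Type*} [NormedAddCommGroup X] [InnerProductSpace ℝ X]
    (ω φ : ℝ → ℝ)
    (hmono : StrictMonoOn ω (Ici (0:ℝ)))
    (hconc : ConcaveOn ℝ (Ici (0:ℝ)) ω)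
    (h0 : ω 0 = 0)
    (h0' : Filter.Tendsto ω (nhdsWithin 0 (Ioi (0:ℝ))) (nhds 0))
    (hφ : ∀ t, φ t = ∫ s in (0:ℝ)..t, ω s) :
    ∀ (z h : X), ∀ l ∈ Icc (0:ℝ) 1,
      l * φ ‖z + (1 - l) • h‖ + (1 - l) * φ ‖z - l • h‖ - φ ‖z‖
        ≤ 2 * (l * (1 - l)) * φ ‖h‖ := by
  intro z h l hl
  simp only [hφ]
  have hmono := hmono.monotoneOn
  have hcont : ContinuousOn ω (Ici 0) :=
    hconc.continuousOn_Ici (continuousWithinAt_Ioi_iff_Ici.1 (by rwa [ContinuousWithinAt, h0]))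
  have hslope := hconc.antitoneOn_div h0
  have hline : ∀ s : ℝ, HasDerivAt (fun s => ∫ u in (0:ℝ)..‖z + s • h‖, ω u)
      ⟪radialField ω (z + s • h), h⟫_ℝ s := fun s => by
    simpa [Function.comp_def] using
      (hasFDerivAt_integral_norm hmono hcont h0 (z + s • h)).comp_hasDerivAt s
        (((hasDerivAt_id s).smul_const h).const_add z)
  have hG : Continuous fun s : ℝ => ⟪radialField ω (z + s • h), h⟫_ℝ := by
    have := continuous_radialField (X := X) hcont h0
    fun_prop
  have hW : IntervalIntegrable (fun u => 2 * ‖h‖ * ω (‖h‖ * u)) volume 0 1 := by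
    refine ContinuousOn.intervalIntegrable (continuousOn_const.mul (hcont.comp
      (continuousOn_const.mul continuousOn_id) fun u hu => ?_))
    simp only [zero_le_one, uIcc_of_le] at hu
    exact mul_nonneg (norm_nonneg h) hu.1
  calc _ ≤ l * (1 - l) * ∫ u in (0:ℝ)..1, 2 * ‖h‖ * ω (‖h‖ * u) := by
        simpa [neg_smul, ← sub_eq_add_neg] using convex_comb_sub_le_integral hline hG hW
          (fun a b hba => inner_radialField_add_smul_sub_le hmono h0 hslope z h hba) hl
    _ = 2 * (l * (1 - l)) * ∫ s in (0:ℝ)..‖h‖, ω s := by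
        have := intervalIntegral.smul_integral_comp_mul_left (a := 0) (b := 1) ω ‖h‖
        simp only [mul_zero, mul_one, smul_eq_mul] at this
        rw [intervalIntegral.integral_const_mul, ← this]
        ring

theorem stmt_16 {X : Type*} [NormedAddCommGroup X] [InnerProductSpace ℝ X]
    (ω φ : ℝ → ℝ)
    (hnonneg : ∀ t ∈ Ici (0:ℝ), 0 ≤ ω t)
    (hmono : StrictMonoOn ω (Ici (0:ℝ)))
    (hconc : ConcaveOn ℝ (Ici (0:ℝ)) ω)
    (h0 : ω 0 = 0)
    (h0' : Filter.Tendsto ω (nhdsWithin 0 (Ioi (0:ℝ))) (nhds 0))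
    (hcoer : Filter.Tendsto ω Filter.atTop Filter.atTop)
    (hφ : ∀ t, φ t = ∫ s in (0:ℝ)..t, ω s) :
    ∀ (z h : X), ∀ l ∈ Icc (0:ℝ) 1,
      l * φ ‖z + (1 - l) • h‖ + (1 - l) * φ ‖z - l • h‖ - φ ‖z‖
        ≤ 2 * (l * (1 - l)) * φ ‖h‖ :=
  stmt_16_general ω φ hmono hconc h0 h0' hφ
end

section
/- Let X be a real normed space, E ⊆ X compact, and (f,G) : E → ℝ × X* a 1-jet with G continuous, f(y) ≥ f(z) + G(z)(y−z) for all y, z ∈ E, and such that f(y) = f(z) + G(z)(y−z) implies G(y) = G(z). Let L = sup_{z∈E} ‖G(z)‖_* and define δ(t) = sup{ (f(z)+G(z)(x−z)−f(y)−G(y)(x−y))/‖x−y‖ : 0 < ‖x−y‖ ≤ t, x ∈ X, y, z ∈ E } for t ≥ 0. Then 0 ≤ δ(t) ≤ 2L for all t ≥ 0, δ is non-decreasing, and lim_{t→0⁺} δ(t) = 0. -/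
open Set

theorem stmt_18 {X : Type*} [NormedAddCommGroup X] [NormedSpace ℝ X]
    (E : Set X) (hE : IsCompact E)
    (f : X → ℝ) (G : X → X →L[ℝ] ℝ) (hGc : ContinuousOn G E)
    (hC : ∀ y ∈ E, ∀ z ∈ E, f z + G z (y - z) ≤ f y)
    (hCW1 : ∀ y ∈ E, ∀ z ∈ E, f y = f z + G z (y - z) → G y = G z)
    (L : ℝ) (hL : L = sSup {r : ℝ | ∃ z ∈ E, r = ‖G z‖})
    (δ : ℝ → ℝ)
    (hδ : ∀ t, δ t = sSup {r : ℝ | ∃ x : X, ∃ y ∈ E, ∃ z ∈ E,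
      0 < ‖x - y‖ ∧ ‖x - y‖ ≤ t ∧
      r = (f z + G z (x - z) - f y - G y (x - y)) / ‖x - y‖}) :
    (∀ t : ℝ, 0 ≤ t → 0 ≤ δ t ∧ δ t ≤ 2 * L) ∧
    MonotoneOn δ (Ici (0:ℝ)) ∧
    Filter.Tendsto δ (nhdsWithin 0 (Ioi (0:ℝ))) (nhds 0) := by
  -- the family of sets
  set S : ℝ → Set ℝ := fun t => {r : ℝ | ∃ x : X, ∃ y ∈ E, ∃ z ∈ E,
      0 < ‖x - y‖ ∧ ‖x - y‖ ≤ t ∧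
      r = (f z + G z (x - z) - f y - G y (x - y)) / ‖x - y‖} with hS
  have hδ' : ∀ t, δ t = sSup (S t) := hδ
  -- L bounds the operator norms
  have hKim : {r : ℝ | ∃ z ∈ E, r = ‖G z‖} = (fun z => ‖G z‖) '' E := by
    ext r; constructor
    · rintro ⟨z, hz, rfl⟩; exact ⟨z, hz, rfl⟩
    · rintro ⟨z, hz, rfl⟩; exact ⟨z, hz, rfl⟩
  have hKbdd : BddAbove {r : ℝ | ∃ z ∈ E, r = ‖G z‖} := by
    rw [hKim]; exact (hE.image_of_continuousOn hGc.norm).bddAbove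
  have hGL : ∀ z ∈ E, ‖G z‖ ≤ L := fun z hz => hL ▸ le_csSup hKbdd ⟨z, hz, rfl⟩
  have hL0 : 0 ≤ L := by
    rcases E.eq_empty_or_nonempty with h | ⟨z, hz⟩
    · have : {r : ℝ | ∃ z ∈ E, r = ‖G z‖} = ∅ := by simp [h]
      rw [hL, this, Real.sSup_empty]
    · exact (norm_nonneg (G z)).trans (hGL z hz)
  -- key algebraic identity
  have key : ∀ (x : X) (y z : X),
      f z + G z (x - z) - f y - G y (x - y)
        = -(f y - f z - G z (y - z)) + (G z (x - y) - G y (x - y)) := by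
    intro x y z
    have h : G z (y - z) + G z (x - y) = G z (x - z) := by
      rw [← map_add]; congr 1; abel
    linarith
  -- pointwise bounds on elements of S t
  have hGdiff : ∀ y ∈ E, ∀ z ∈ E, ∀ v : X,
      G z v - G y v ≤ 2 * L * ‖v‖ := by
    intro y hy z hz v
    have h1 : G z v ≤ L * ‖v‖ := by
      calc G z v ≤ |G z v| := le_abs_self _
        _ = ‖G z v‖ := (Real.norm_eq_abs _).symm
        _ ≤ ‖G z‖ * ‖v‖ := (G z).le_opNorm v
        _ ≤ L * ‖v‖ := by
            exact mul_le_mul_of_nonneg_right (hGL z hz) (norm_nonneg v)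
    have h2 : -(G y v) ≤ L * ‖v‖ := by
      calc -(G y v) ≤ |G y v| := neg_le_abs _
        _ = ‖G y v‖ := (Real.norm_eq_abs _).symm
        _ ≤ ‖G y‖ * ‖v‖ := (G y).le_opNorm v
        _ ≤ L * ‖v‖ := mul_le_mul_of_nonneg_right (hGL y hy) (norm_nonneg v)
    nlinarith
  have hub : ∀ t : ℝ, ∀ r ∈ S t, r ≤ 2 * L := by
    rintro t r ⟨x, y, hy, z, hz, hpos, _, rfl⟩
    rw [div_le_iff₀ hpos]
    rw [key x y z]
    have ha : 0 ≤ f y - f z - G z (y - z) := by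
      have := hC y hy z hz; linarith
    have := hGdiff y hy z hz (x - y)
    linarith
  have hbdd : ∀ t : ℝ, BddAbove (S t) := fun t => ⟨2 * L, fun r hr => hub t r hr⟩
  -- zero is in S t whenever S t is nonempty
  have hzero : ∀ t : ℝ, (S t).Nonempty → (0 : ℝ) ∈ S t := by
    rintro t ⟨r, x, y, hy, z, hz, hpos, hle, rfl⟩
    refine ⟨x, y, hy, y, hy, hpos, hle, ?_⟩
    have : f y + G y (x - y) - f y - G y (x - y) = 0 := by ring
    rw [this, zero_div]
  have hnn : ∀ t : ℝ, 0 ≤ δ t := by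
    intro t
    rcases (S t).eq_empty_or_nonempty with h | h
    · rw [hδ' t, h, Real.sSup_empty]
    · rw [hδ' t]; exact le_csSup (hbdd t) (hzero t h)
  have hδub : ∀ t : ℝ, δ t ≤ 2 * L := by
    intro t
    rcases (S t).eq_empty_or_nonempty with h | h
    · rw [hδ' t, h, Real.sSup_empty]; positivity
    · rw [hδ' t]; exact csSup_le h (hub t)
  -- monotonicity
  have hmono : MonotoneOn δ (Ici (0:ℝ)) := by
    intro s _ t _ hst
    rcases (S s).eq_empty_or_nonempty with h | h
    · rw [hδ' s, h, Real.sSup_empty]; exact hnn t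
    · rw [hδ' s, hδ' t]
      refine csSup_le_csSup (hbdd t) h ?_
      rintro r ⟨x, y, hy, z, hz, hpos, hle, rfl⟩
      exact ⟨x, y, hy, z, hz, hpos, hle.trans hst, rfl⟩
  -- f is Lipschitz on E, hence continuous
  have hflip : ∀ y ∈ E, ∀ z ∈ E, f y - f z ≤ L * ‖y - z‖ := by
    intro y hy z hz
    have h := hC z hz y hy
    have h2 : -(G y (z - y)) ≤ L * ‖z - y‖ := by
      calc -(G y (z - y)) ≤ |G y (z - y)| := neg_le_abs _
        _ = ‖G y (z - y)‖ := (Real.norm_eq_abs _).symm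
        _ ≤ ‖G y‖ * ‖z - y‖ := (G y).le_opNorm _
        _ ≤ L * ‖z - y‖ := mul_le_mul_of_nonneg_right (hGL y hy) (norm_nonneg _)
    rw [norm_sub_rev]
    linarith
  have hfc : ContinuousOn f E := by
    refine (LipschitzOnWith.of_dist_le_mul (K := ⟨L, hL0⟩) ?_).continuousOn
    intro y hy z hz
    rw [Real.dist_eq, dist_eq_norm]
    rw [abs_sub_le_iff]
    exact ⟨hflip y hy z hz, by rw [norm_sub_rev]; exact hflip z hz y hy⟩
  -- the uniform separation lemma
  have huc : ∀ ε : ℝ, 0 < ε → ∃ η : ℝ, 0 < η ∧ ∀ y ∈ E, ∀ z ∈ E,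
      f y - f z - G z (y - z) < η → ‖G z - G y‖ ≤ ε := by
    intro ε hε
    set Φ : X × X → ℝ := fun p => f p.1 - f p.2 - G p.2 (p.1 - p.2) with hΦdef
    set A : Set (X × X) := (E ×ˢ E) ∩ (fun p : X × X => ‖G p.2 - G p.1‖) ⁻¹' (Ici ε) with hA
    have hΨc : ContinuousOn (fun p : X × X => ‖G p.2 - G p.1‖) (E ×ˢ E) := by
      refine ContinuousOn.norm ?_
      exact ContinuousOn.sub
        (hGc.comp continuousOn_snd (fun p hp => hp.2))
        (hGc.comp continuousOn_fst (fun p hp => hp.1))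
    have hΦc : ContinuousOn Φ (E ×ˢ E) := by
      refine ContinuousOn.sub (ContinuousOn.sub ?_ ?_) ?_
      · exact hfc.comp continuousOn_fst (fun p hp => hp.1)
      · exact hfc.comp continuousOn_snd (fun p hp => hp.2)
      · exact ContinuousOn.clm_apply (hGc.comp continuousOn_snd (fun p hp => hp.2))
          (continuousOn_fst.sub continuousOn_snd)
    have hAclosed : IsClosed A :=
      hΨc.preimage_isClosed_of_isClosed (hE.prod hE).isClosed isClosed_Ici
    have hAcomp : IsCompact A :=
      (hE.prod hE).of_isClosed_subset hAclosed inter_subset_left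
    rcases A.eq_empty_or_nonempty with hAe | hAne
    · refine ⟨1, one_pos, fun y hy z hz _ => ?_⟩
      by_contra hcon
      push_neg at hcon
      have : (y, z) ∈ A := ⟨⟨hy, hz⟩, le_of_lt hcon⟩
      rw [hAe] at this; exact this
    · obtain ⟨p₀, hp₀A, hmin⟩ := hAcomp.exists_isMinOn hAne (hΦc.mono inter_subset_left)
      obtain ⟨⟨hp1, hp2⟩, hpε⟩ := hp₀A
      have hΦpos : 0 < Φ p₀ := by
        have hge : 0 ≤ Φ p₀ := by
          have := hC p₀.1 hp1 p₀.2 hp2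
          simp only [hΦdef]; linarith
        rcases hge.lt_or_eq with h | h
        · exact h
        · exfalso
          have heq : f p₀.1 = f p₀.2 + G p₀.2 (p₀.1 - p₀.2) := by
            simp only [hΦdef] at h; linarith
          have := hCW1 p₀.1 hp1 p₀.2 hp2 heq
          have : ‖G p₀.2 - G p₀.1‖ = 0 := by rw [this]; simp
          have hpε' : ε ≤ ‖G p₀.2 - G p₀.1‖ := hpε
          rw [this] at hpε'
          linarith
      refine ⟨Φ p₀, hΦpos, fun y hy z hz hlt => ?_⟩
      by_contra hcon
      push_neg at hcon
      have hmem : (y, z) ∈ A := ⟨⟨hy, hz⟩, le_of_lt hcon⟩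
      have := hmin hmem
      simp only [hΦdef] at this
      exact absurd hlt (not_lt.mpr this)
  -- δ t ≤ ε for small t
  have hsmall : ∀ ε : ℝ, 0 < ε → ∃ t : ℝ, 0 < t ∧ δ t ≤ ε := by
    intro ε hε
    obtain ⟨η, hη, hηs⟩ := huc ε hε
    refine ⟨η / (2 * L + 1), by positivity, ?_⟩
    set t := η / (2 * L + 1) with ht
    have hubε : ∀ r ∈ S t, r ≤ ε := by
      rintro r ⟨x, y, hy, z, hz, hpos, hle, rfl⟩
      set a := f y - f z - G z (y - z) with ha
      have ha0 : 0 ≤ a := by have := hC y hy z hz; simp only [ha]; linarith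
      rw [div_le_iff₀ hpos, key x y z, ← ha]
      by_cases hcase : a < η
      · -- use that the gradients are close
        have hGsmall : ‖G z - G y‖ ≤ ε := hηs y hy z hz hcase
        have hv : G z (x - y) - G y (x - y) ≤ ε * ‖x - y‖ := by
          calc G z (x - y) - G y (x - y) = (G z - G y) (x - y) := by simp
            _ ≤ |(G z - G y) (x - y)| := le_abs_self _
            _ = ‖(G z - G y) (x - y)‖ := (Real.norm_eq_abs _).symm
            _ ≤ ‖G z - G y‖ * ‖x - y‖ := (G z - G y).le_opNorm _
            _ ≤ ε * ‖x - y‖ := mul_le_mul_of_nonneg_right hGsmall (norm_nonneg _)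
        nlinarith
      · push_neg at hcase
        have h2L : G z (x - y) - G y (x - y) ≤ 2 * L * ‖x - y‖ := hGdiff y hy z hz _
        have hlt : ‖x - y‖ ≤ η / (2 * L + 1) := hle
        have h1 : 2 * L * ‖x - y‖ ≤ 2 * L * (η / (2 * L + 1)) :=
          mul_le_mul_of_nonneg_left hlt (by positivity)
        have h2 : 2 * L * (η / (2 * L + 1)) < η := by
          rw [mul_div_assoc']
          rw [div_lt_iff₀ (by positivity)]
          nlinarith
        nlinarith [mul_pos hε hpos]
    rcases (S t).eq_empty_or_nonempty with h | h
    · rw [hδ' t, h, Real.sSup_empty]; exact le_of_lt hε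
    · rw [hδ' t]; exact csSup_le h hubε
  refine ⟨fun t _ => ⟨hnn t, hδub t⟩, hmono, ?_⟩
  rw [Metric.tendsto_nhdsWithin_nhds]
  intro ε hε
  obtain ⟨t, ht, hδt⟩ := hsmall (ε / 2) (by positivity)
  refine ⟨t, ht, fun {s} hs hd => ?_⟩
  have hs' : 0 < s := hs
  rw [Real.dist_eq, sub_zero, abs_lt] at hd
  have hst : s ≤ t := le_of_lt hd.2
  have h1 : δ s ≤ δ t := hmono (le_of_lt hs') (le_of_lt ht) hst
  rw [Real.dist_eq, sub_zero, abs_of_nonneg (hnn s)]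
  linarith
end
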